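/- arXiv:1710.00768 — 4 statements merged into one kernel-verified Lean document; each statement's English description precedes it below -/
import Mathlib

section
/- Let t ∈ ℝ, let r, s ∈ ℝ satisfy r + s = 1/2 and r·s = t, let λ ∈ ℂ∖{0}, and let A_t(λ) be the Delaunay residue. For n ∈ ℕ let L_{t,n} be the ℂ-linear endomorphism of the space of traceless 2×2 complex matrices given by L_{t,n}(X) = A_t(λ)·X − X·A_t(λ) + n·X. Then: (i) if n ≥ 2 and |t·λ⁻¹·(λ−1)²| < 1/4, then L_{t,n} is bijective; (ii) if n = 1, t ≠ 0 and λ ≠ 1, then L_{t,1} is bijective. -/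
open Matrix

/-- The Delaunay residue `A_t(λ) = [[0, rλ⁻¹ + s], [rλ + s, 0]]`. -/
noncomputable def delaunayResidue (r s : ℝ) (lam : ℂ) : Matrix (Fin 2) (Fin 2) ℂ :=
  !![0, (r : ℂ) * lam⁻¹ + (s : ℂ); (r : ℂ) * lam + (s : ℂ), 0]

/-- The Lie algebra `sl₂(ℂ)` of traceless 2×2 complex matrices, as a submodule. -/
noncomputable def sl2C : Submodule ℂ (Matrix (Fin 2) (Fin 2) ℂ) :=
  LinearMap.ker (Matrix.traceLinearMap (Fin 2) ℂ ℂ)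

/-- The operator `L_n(X) = [A, X] + n • X` as an endomorphism of `sl₂(ℂ)`. -/
noncomputable def Lop (A : Matrix (Fin 2) (Fin 2) ℂ) (n : ℕ) : sl2C →ₗ[ℂ] sl2C where
  toFun X := ⟨A * (X : Matrix (Fin 2) (Fin 2) ℂ) - (X : Matrix (Fin 2) (Fin 2) ℂ) * A +
      (n : ℂ) • (X : Matrix (Fin 2) (Fin 2) ℂ), by
    have hX : Matrix.trace (X : Matrix (Fin 2) (Fin 2) ℂ) = 0 := X.2
    simp [sl2C, Matrix.traceLinearMap, Matrix.trace_add, Matrix.trace_sub, Matrix.trace_smul,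
      Matrix.trace_mul_comm A, hX]⟩
  map_add' X Y := by
    ext
    simp [Matrix.mul_add, Matrix.add_mul, smul_add]
    abel
  map_smul' c X := by
    ext
    simp [Matrix.mul_smul, Matrix.smul_mul, smul_sub, smul_add, smul_comm c]
    ring


/-!
If `A * A = c • 1`, then `ad A` satisfies `(ad A)³ = 4c • ad A`. A kernel vector `X` of
`ad A + n` is an eigenvector of `ad A` for `-n`, so `(-n)³ X = -4cn X`, i.e.
`n (n² - 4c) X = 0`; injectivity then gives bijectivity on the finite-dimensional `sl₂(ℂ)`.
For the Delaunay residue, `c = μ_t(λ)² = 1/4 + tλ⁻¹(λ - 1)²`, so `n (n² - 4c)` is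
`n (n² - 1 - 4tλ⁻¹(λ - 1)²)`, which the hypotheses of (i) and (ii) keep away from zero.
-/

section
attribute [local instance 100] LieRing.ofAssociativeRing
variable {K R : Type*} [CommRing K] [Ring R] [Algebra K R] {a : R} {c : K}

theorem lie_lie_of_mul_self_eq_smul_one (ha : a * a = c • 1) (x : R) :
    ⁅a, ⁅a, x⁆⁆ = (2 * c) • x - 2 • (a * x * a) := by
  have : ⁅a, ⁅a, x⁆⁆ = (a * a) * x - 2 • (a * x * a) + x * (a * a) := by
    simp only [Ring.lie_def]; noncomm_ring
  rw [this, ha, smul_one_mul, mul_smul_one]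
  module

theorem mul_lie_mul_of_mul_self_eq_smul_one (ha : a * a = c • 1) (x : R) :
    a * ⁅a, x⁆ * a = -(c • ⁅a, x⁆) := by
  have : a * ⁅a, x⁆ * a = (a * a) * x * a - a * x * (a * a) := by
    rw [Ring.lie_def]; noncomm_ring
  rw [this, ha, smul_one_mul, mul_smul_one, smul_mul_assoc, ← smul_sub, ← smul_neg, Ring.lie_def,
    neg_sub]

theorem lie_lie_lie_of_mul_self_eq_smul_one (ha : a * a = c • 1) (x : R) :
    ⁅a, ⁅a, ⁅a, x⁆⁆⁆ = (4 * c) • ⁅a, x⁆ := by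
  rw [lie_lie_of_mul_self_eq_smul_one ha, mul_lie_mul_of_mul_self_eq_smul_one ha]
  module

theorem smul_eq_zero_of_lie_add_smul_eq_zero (ha : a * a = c • 1) {n : K} {x : R}
    (hx : ⁅a, x⁆ + n • x = 0) : (n * (n ^ 2 - 4 * c)) • x = 0 := by
  have h1 : ⁅a, x⁆ = -(n • x) := eq_neg_of_add_eq_zero_left hx
  have h2 : ⁅a, ⁅a, x⁆⁆ = n ^ 2 • x := by
    rw [h1, lie_neg, lie_smul n a x, h1]; module
  have h3 : ⁅a, ⁅a, ⁅a, x⁆⁆⁆ = -(n ^ 3 • x) := by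
    rw [h2, lie_smul (n ^ 2) a x, h1]; module
  rw [lie_lie_lie_of_mul_self_eq_smul_one ha, h1] at h3
  linear_combination (norm := module) h3

theorem Lop_bijective_of_mul_self_eq_smul_one {A : Matrix (Fin 2) (Fin 2) ℂ} {c : ℂ}
    (hA : A * A = c • 1) {n : ℕ} (hn : (n : ℂ) * ((n : ℂ) ^ 2 - 4 * c) ≠ 0) :
    Function.Bijective (Lop A n) := by
  have hinj : Function.Injective (Lop A n) := by
    rw [← LinearMap.ker_eq_bot, LinearMap.ker_eq_bot']
    intro X hX
    have hX' : ⁅A, X.1⁆ + (n : ℂ) • X.1 = 0 := congrArg Subtype.val hX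
    exact Subtype.ext <|
      (smul_eq_zero.mp (smul_eq_zero_of_lie_add_smul_eq_zero hA hX')).resolve_left hn
  exact ⟨hinj, LinearMap.injective_iff_surjective.mp hinj⟩

end

theorem antidiagonal_mul_self {K : Type*} [CommRing K] (p q : K) :
    !![0, p; q, 0] * !![0, p; q, 0] = (p * q) • (1 : Matrix (Fin 2) (Fin 2) K) := by
  ext i j
  fin_cases i <;> fin_cases j <;> simp [mul_comm]

theorem delaunayResidue_mul_self {t r s : ℝ} (hrs : r + s = 1 / 2) (hprod : r * s = t) {lam : ℂ}
    (hlam : lam ≠ 0) :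
    delaunayResidue r s lam * delaunayResidue r s lam =
      (1 / 4 + (t : ℂ) * lam⁻¹ * (lam - 1) ^ 2) • 1 := by
  rw [delaunayResidue, antidiagonal_mul_self]
  congr 1
  have hrs' : (r : ℂ) + s = 1 / 2 := by simpa using congrArg ((↑) : ℝ → ℂ) hrs
  have hprod' : (r : ℂ) * s = t := by exact_mod_cast hprod
  linear_combination (lam ^ 2 * lam⁻¹ - 2 * lam * lam⁻¹ + lam⁻¹) * hprod'
    + ((r : ℂ) ^ 2 - r * s * lam + 2 * r * s) * inv_mul_cancel₀ hlam + ((r : ℂ) + s + 1 / 2) * hrs'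

/-- Invertibility of `L_{t,n}` on `sl₂(ℂ)` for the Delaunay residue. -/
theorem Lop_delaunay_bijective (t : ℝ) (r s : ℝ) (hrs : r + s = 1 / 2) (hprod : r * s = t)
    (lam : ℂ) (hlam : lam ≠ 0) (n : ℕ) :
    (2 ≤ n → ‖(t : ℂ) * lam⁻¹ * (lam - 1) ^ 2‖ < 1 / 4 →
      Function.Bijective (Lop (delaunayResidue r s lam) n)) ∧
    (n = 1 → t ≠ 0 → lam ≠ 1 →
      Function.Bijective (Lop (delaunayResidue r s lam) n)) := by
  set w : ℂ := (t : ℂ) * lam⁻¹ * (lam - 1) ^ 2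
  have hL (h : (n : ℂ) * ((n : ℂ) ^ 2 - 4 * (1 / 4 + w)) ≠ 0) :=
    Lop_bijective_of_mul_self_eq_smul_one (delaunayResidue_mul_self hrs hprod hlam) h
  refine ⟨fun hn hw => hL ?_, fun hn ht hlam1 => hL ?_⟩
  · refine mul_ne_zero (Nat.cast_ne_zero.mpr (by omega)) fun h => ?_
    have hn2 : (4 : ℝ) ≤ (n : ℝ) ^ 2 := by
      have : (2 : ℝ) ≤ n := by exact_mod_cast hn
      nlinarith
    have : (n : ℝ) ^ 2 < 2 :=
      calc (n : ℝ) ^ 2 = ‖(n : ℂ) ^ 2‖ := by simp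
        _ = ‖1 + 4 * w‖ := by rw [show (n : ℂ) ^ 2 = 1 + 4 * w by linear_combination h]
        _ ≤ 1 + 4 * ‖w‖ := by simpa using norm_add_le (1 : ℂ) (4 * w)
        _ < 2 := by linarith
    linarith
  · subst hn
    have hw : w ≠ 0 := mul_ne_zero (mul_ne_zero (mod_cast ht) (inv_ne_zero hlam))
      (pow_ne_zero _ (sub_ne_zero.mpr hlam1))
    intro h
    exact hw (by linear_combination -h / 4)
end

section
/- Extension of the Iwasawa factors: Let R > 1 and let Φ : 𝔸_R → SL₂(ℂ) be holomorphic. Suppose F is continuous on the unit circle with values in SU₂, and B is continuous on the closed unit disk, holomorphic on the open unit disk, with det B ≡ 1 and B(0) upper triangular with positive real diagonal entries, such that Φ(λ) = F(λ)·B(λ) for every |λ| = 1. Then there exist a holomorphic map F̂ : 𝔸_R → SL₂(ℂ) with F̂(λ) = F(λ) for all |λ| = 1 and satisfying the reflection identity (conjugate transpose of F̂(1/conj(λ))) = F̂(λ)⁻¹ for all λ ∈ 𝔸_R, and a holomorphic map B̂ : D_R → SL₂(ℂ) with B̂(λ) = B(λ) for all |λ| ≤ 1/√1 — that is, B̂ agrees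 with B on the closed unit disk — such that Φ(λ) = F̂(λ)·B̂(λ) for all λ ∈ 𝔸_R. -/
open Matrix Complex Metric Set Filter Topology

attribute [local instance] Matrix.normedAddCommGroup Matrix.normedSpace

/-- The open annulus `{λ : 1/R < |λ| < R}`. -/
def annulus (R : ℝ) : Set ℂ := {lam : ℂ | 1 / R < ‖lam‖ ∧ ‖lam‖ < R}

noncomputable section IwasawaAux

namespace IwasawaAux

/- ### Reflection of holomorphic functions -/

lemma hasDerivAt_conj_comp {f : ℂ → ℂ} {z d : ℂ}
    (h : HasDerivAt f d ((starRingEnd ℂ) z)) :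
    HasDerivAt (fun w => (starRingEnd ℂ) (f ((starRingEnd ℂ) w))) ((starRingEnd ℂ) d) z := by
  rw [hasDerivAt_iff_tendsto] at h ⊢
  have hc : Tendsto (fun w : ℂ => (starRingEnd ℂ) w) (𝓝 z) (𝓝 ((starRingEnd ℂ) z)) :=
    (Complex.continuous_conj.tendsto z)
  have h2 := h.comp hc
  convert h2 using 2 with w
  simp only [Function.comp]
  congr 1
  · rw [← map_sub, RCLike.norm_conj]
  · rw [show f ((starRingEnd ℂ) w) - f ((starRingEnd ℂ) z) -
        ((starRingEnd ℂ) w - (starRingEnd ℂ) z) • d =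
        (starRingEnd ℂ) ((starRingEnd ℂ) (f ((starRingEnd ℂ) w)) -
          (starRingEnd ℂ) (f ((starRingEnd ℂ) z)) - (w - z) • (starRingEnd ℂ) d) by
          simp [map_sub, smul_eq_mul, _root_.map_mul], RCLike.norm_conj]

lemma differentiableAt_conj_comp {f : ℂ → ℂ} {z : ℂ}
    (h : DifferentiableAt ℂ f ((starRingEnd ℂ) z)) :
    DifferentiableAt ℂ (fun w => (starRingEnd ℂ) (f ((starRingEnd ℂ) w))) z :=
  (hasDerivAt_conj_comp h.hasDerivAt).differentiableAt

/- ### Gluing across the unit circle -/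

variable {E : Type*} [NormedAddCommGroup E] [NormedSpace ℂ E] [CompleteSpace E]

lemma glue_circle {ρ : ℝ} (hρ : 1 < ρ) {g : ℂ → E}
    (hc : ContinuousOn g (closedBall (0:ℂ) ρ))
    (hd : ∀ z ∈ ball (0:ℂ) ρ, ‖z‖ ≠ 1 → DifferentiableAt ℂ g z) :
    DifferentiableOn ℂ g (ball (0:ℂ) ρ) := by
  have hρ0 : (0:ℝ) < ρ := lt_trans one_pos hρ
  lift ρ to NNReal using hρ0.le with ρ' hρ'
  set h : ℂ → E := fun w => (2 * Real.pi * I : ℂ)⁻¹ • ∮ z in C(0, ρ'), (z - w)⁻¹ • g z with hh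
  have habs : ∀ z : ℂ, dist z (0:ℂ) = ‖z‖ := by
    intro z; rw [Complex.dist_eq, sub_zero]
  have hπ : (2 * Real.pi * I : ℂ) ≠ 0 := by
    simp [Real.pi_ne_zero, Complex.I_ne_zero, Complex.ext_iff]
  have hint : CircleIntegrable g 0 ρ' :=
    (hc.mono sphere_subset_closedBall).circleIntegrable hρ0.le
  have hps := hasFPowerSeriesOn_cauchy_integral hint (by exact_mod_cast hρ0)
  have hhd : DifferentiableOn ℂ h (ball (0:ℂ) ρ') := by
    have := hps.differentiableOn
    rwa [Metric.emetric_ball_nnreal] at this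
  have key : ∀ w ∈ ball (0:ℂ) ρ', ‖w‖ ≠ 1 → g w = h w := by
    intro w hw hw1
    have hwρ : ‖w‖ < ρ' := by rwa [mem_ball, habs] at hw
    rcases lt_or_gt_of_ne hw1 with hlt | hgt
    · have hw1' : w ∈ ball (0:ℂ) 1 := by rwa [mem_ball, habs]
      have eq1 : (∮ z in C(0, (1:ℝ)), (z - w)⁻¹ • g z) = (2 * Real.pi * I : ℂ) • g w := by
        refine circleIntegral_sub_inv_smul_of_differentiable_on_off_countable
          (s := ∅) countable_empty hw1' (hc.mono (closedBall_subset_closedBall hρ.le)) ?_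
        intro x hx
        refine hd x (ball_subset_ball hρ.le hx.1) ?_
        have := hx.1; rw [mem_ball, habs] at this; exact ne_of_lt this
      have eq2 : (∮ z in C(0, (ρ':ℝ)), (z - w)⁻¹ • g z) = ∮ z in C(0, (1:ℝ)), (z - w)⁻¹ • g z := by
        refine circleIntegral_eq_of_differentiable_on_annulus_off_countable one_pos hρ.le
          (s := ∅) countable_empty ?_ ?_
        · refine ContinuousOn.smul ?_ (hc.mono diff_subset)
          refine ContinuousOn.inv₀ (continuousOn_id.sub continuousOn_const) ?_
          intro z hz
          have h1 : (1:ℝ) ≤ ‖z‖ := by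
            have := hz.2; rw [mem_ball, habs] at this; linarith [not_lt.mp this]
          refine sub_ne_zero.2 fun hzw => ?_
          rw [show z = w from hzw] at h1; linarith
        · intro z hz
          have hz1 : 1 < ‖z‖ := by
            have := hz.1.2; rw [mem_closedBall, habs] at this; linarith [not_le.mp this]
          have hzw : z ≠ w := fun hzw => by rw [hzw] at hz1; linarith
          exact ((differentiableAt_id.sub_const w).inv (sub_ne_zero.2 hzw)).smul
            (hd z hz.1.1 (by linarith))
      rw [hh]; simp only [eq2, eq1]; rw [inv_smul_smul₀ hπ]
    · have hw0 : w ∉ closedBall (0:ℂ) 1 := by rw [mem_closedBall, habs]; linarith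
      set q : ℂ → E := dslope g w with hq
      have hwmem : w ∈ ball (0:ℂ) ρ' \ closedBall (0:ℂ) 1 := ⟨hw, hw0⟩
      have hopen : IsOpen (ball (0:ℂ) ρ' \ closedBall (0:ℂ) 1) :=
        isOpen_ball.sdiff isClosed_closedBall
      have hnb : closedBall (0:ℂ) ρ' \ ball (0:ℂ) 1 ∈ 𝓝 w := by
        refine Filter.mem_of_superset (hopen.mem_nhds hwmem) ?_
        exact diff_subset_diff ball_subset_closedBall Metric.ball_subset_closedBall
      have hdw : DifferentiableAt ℂ g w := hd w hw (ne_of_gt hgt)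
      have hqc : ContinuousOn q (closedBall (0:ℂ) ρ' \ ball (0:ℂ) 1) :=
        (continuousOn_dslope hnb).2 ⟨hc.mono diff_subset, hdw⟩
      have hqd : ∀ z ∈ (ball (0:ℂ) ρ' \ closedBall (0:ℂ) 1) \ {w}, DifferentiableAt ℂ q z := by
        intro z hz
        have hz1 : 1 < ‖z‖ := by
          have := hz.1.2; rw [mem_closedBall, habs] at this; linarith [not_le.mp this]
        have hzw : z ≠ w := fun hzq => hz.2 (by simp [hzq])
        exact (differentiableAt_dslope_of_ne hzw).2 (hd z hz.1.1 (by linarith))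
      have eqq : (∮ z in C(0, (ρ':ℝ)), q z) = ∮ z in C(0, (1:ℝ)), q z :=
        circleIntegral_eq_of_differentiable_on_annulus_off_countable one_pos hρ.le
          (countable_singleton w) hqc hqd
      have hsub1 : sphere (0:ℂ) 1 ⊆ closedBall (0:ℂ) ρ' :=
        Metric.sphere_subset_closedBall.trans (closedBall_subset_closedBall hρ.le)
      have hne1 : ∀ z ∈ sphere (0:ℂ) 1, z ≠ w := by
        intro z hz hzw
        subst hzw; rw [mem_sphere, habs] at hz; exact hgt.ne' hz
      have hneρ : ∀ z ∈ sphere (0:ℂ) (ρ':ℝ), z ≠ w := by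
        intro z hz hzw
        subst hzw; rw [mem_sphere, habs] at hz; exact absurd hz (ne_of_lt hwρ)
      have hqeq : ∀ r : ℝ, (∀ z ∈ sphere (0:ℂ) r, z ≠ w) →
          EqOn q (fun z => (z - w)⁻¹ • g z - (z - w)⁻¹ • g w) (sphere 0 r) := by
        intro r hne z hzs
        rw [hq, dslope_of_ne _ (hne z hzs), slope_def_module, smul_sub]
      have hcw : ∀ r : ℝ, (∀ z ∈ sphere (0:ℂ) r, z ≠ w) →
          ContinuousOn (fun z => (z - w)⁻¹) (sphere (0:ℂ) r) := by
        intro r hne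
        exact (continuousOn_id.sub continuousOn_const).inv₀
          (fun z hz => sub_ne_zero.2 (hne z hz))
      have hi1g : CircleIntegrable (fun z => (z - w)⁻¹ • g z) 0 1 :=
        ((hcw 1 hne1).smul (hc.mono hsub1)).circleIntegrable zero_le_one
      have hi1w : CircleIntegrable (fun z => (z - w)⁻¹ • g w) 0 1 :=
        ((hcw 1 hne1).smul continuousOn_const).circleIntegrable zero_le_one
      have hiρg : CircleIntegrable (fun z => (z - w)⁻¹ • g z) 0 ρ' :=
        ((hcw ρ' hneρ).smul (hc.mono Metric.sphere_subset_closedBall)).circleIntegrable hρ0.le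
      have hiρw : CircleIntegrable (fun z => (z - w)⁻¹ • g w) 0 ρ' :=
        ((hcw ρ' hneρ).smul continuousOn_const).circleIntegrable hρ0.le
      have e1 : (∮ z in C(0, (1:ℝ)), q z)
          = (∮ z in C(0, (1:ℝ)), (z - w)⁻¹ • g z) - ∮ z in C(0, (1:ℝ)), (z - w)⁻¹ • g w := by
        rw [circleIntegral.integral_congr zero_le_one (hqeq 1 hne1),
          circleIntegral.integral_sub hi1g hi1w]
      have eρ : (∮ z in C(0, (ρ':ℝ)), q z)
          = (∮ z in C(0, (ρ':ℝ)), (z - w)⁻¹ • g z) - ∮ z in C(0, (ρ':ℝ)), (z - w)⁻¹ • g w := by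
        rw [circleIntegral.integral_congr hρ0.le (hqeq ρ' hneρ),
          circleIntegral.integral_sub hiρg hiρw]
      have hcball : ContinuousOn (fun z => (z - w)⁻¹) (closedBall (0:ℂ) 1) := by
        refine (continuousOn_id.sub continuousOn_const).inv₀ ?_
        intro z hz
        rw [mem_closedBall, habs] at hz
        exact sub_ne_zero.2 (fun hzw => by rw [show z = w from hzw] at hz; linarith)
      have hdball : ∀ z ∈ ball (0:ℂ) 1, z ≠ w := by
        intro z hz hzw
        rw [mem_ball, habs] at hz; rw [hzw] at hz; linarith
      have hz1g : (∮ z in C(0, (1:ℝ)), (z - w)⁻¹ • g z) = 0 := by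
        refine circleIntegral_eq_zero_of_differentiable_on_off_countable zero_le_one
          (s := ∅) countable_empty
          (hcball.smul (hc.mono (closedBall_subset_closedBall hρ.le))) ?_
        intro z hz
        have hz' : ‖z‖ < 1 := by
          have := hz.1; rwa [mem_ball, habs] at this
        exact ((differentiableAt_id.sub_const w).inv
          (sub_ne_zero.2 (hdball z hz.1))).smul
          (hd z (ball_subset_ball hρ.le hz.1) (ne_of_lt hz'))
      have hz1w : (∮ z in C(0, (1:ℝ)), (z - w)⁻¹ • g w) = 0 := by
        refine circleIntegral_eq_zero_of_differentiable_on_off_countable zero_le_one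
          (s := ∅) countable_empty (hcball.smul continuousOn_const) ?_
        intro z hz
        exact ((differentiableAt_id.sub_const w).inv
          (sub_ne_zero.2 (hdball z hz.1))).smul_const _
      have hρw : (∮ z in C(0, (ρ':ℝ)), (z - w)⁻¹ • g w) = (2 * Real.pi * I : ℂ) • g w := by
        rw [circleIntegral.integral_smul_const, circleIntegral.integral_sub_inv_of_mem_ball
          (by rwa [mem_ball, habs])]
      rw [eρ, e1, hz1g, hz1w, hρw, sub_zero] at eqq
      have hfin : (∮ z in C(0, (ρ':ℝ)), (z - w)⁻¹ • g z) = (2 * Real.pi * I : ℂ) • g w :=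
        sub_eq_zero.mp eqq
      rw [hh]; simp only [hfin]; rw [inv_smul_smul₀ hπ]
  have geq : EqOn g h (ball (0:ℂ) ρ') := by
    intro w hw
    by_cases hw1 : ‖w‖ = 1
    · have hA : ContinuousAt g w := hc.continuousAt (closedBall_mem_nhds_of_mem hw)
      have hB : ContinuousAt h w := (hhd.differentiableAt (isOpen_ball.mem_nhds hw)).continuousAt
      refine tendsto_nhds_unique_of_frequently_eq hA.tendsto hB.tendsto ?_
      have hta : Tendsto (fun r : ℝ => (r : ℂ) * w) (𝓝[<] (1:ℝ)) (𝓝 w) := by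
        have h2 : Tendsto (fun r : ℝ => (r : ℂ) * w) (𝓝 (1:ℝ)) (𝓝 w) := by
          have := ((Complex.continuous_ofReal.mul (continuous_const (y := w))).tendsto (1:ℝ))
          convert this using 2 <;> simp
        exact h2.mono_left nhdsWithin_le_nhds
      have hev : ∀ᶠ r : ℝ in 𝓝[<] (1:ℝ), g ((r:ℂ) * w) = h ((r:ℂ) * w) := by
        filter_upwards [Ioo_mem_nhdsLT_of_mem (show (1:ℝ) ∈ Ioc (0:ℝ) 1 by norm_num)] with r hr
        have habsr : ‖(r:ℂ) * w‖ = r := by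
          rw [norm_mul, hw1, mul_one, Complex.norm_real, Real.norm_eq_abs, abs_of_pos hr.1]
        refine key _ ?_ ?_
        · rw [mem_ball, habs, habsr]; exact lt_trans hr.2 hρ
        · rw [habsr]; exact ne_of_lt hr.2
      exact hta.frequently (hev.frequently)
    · exact key w hw hw1
  exact hhd.congr geq

/- ### 2×2 matrix toolbox -/

local notation "M2" => Matrix (Fin 2) (Fin 2) ℂ

lemma mat_diffOn_iff {f : ℂ → M2} {s : Set ℂ} :
    DifferentiableOn ℂ f s ↔ ∀ i j, DifferentiableOn ℂ (fun z => f z i j) s := by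
  refine differentiableOn_pi.trans ?_
  exact forall_congr' (fun i => differentiableOn_pi)

lemma mat_contOn_iff {f : ℂ → M2} {s : Set ℂ} :
    ContinuousOn f s ↔ ∀ i j, ContinuousOn (fun z => f z i j) s := by
  refine continuousOn_pi.trans ?_
  exact forall_congr' (fun i => continuousOn_pi)

lemma DiffOn.mmul {f g : ℂ → M2} {s : Set ℂ} (hf : DifferentiableOn ℂ f s)
    (hg : DifferentiableOn ℂ g s) : DifferentiableOn ℂ (fun z => f z * g z) s := by
  rw [mat_diffOn_iff] at *
  intro i j
  simp only [Matrix.mul_apply, Fin.sum_univ_two]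
  exact ((hf i 0).mul (hg 0 j)).add ((hf i 1).mul (hg 1 j))

lemma ContOn.mmul {f g : ℂ → M2} {s : Set ℂ} (hf : ContinuousOn f s)
    (hg : ContinuousOn g s) : ContinuousOn (fun z => f z * g z) s := by
  rw [mat_contOn_iff] at *
  intro i j
  simp only [Matrix.mul_apply, Fin.sum_univ_two]
  exact ((hf i 0).mul (hg 0 j)).add ((hf i 1).mul (hg 1 j))

lemma adj_entries (A : M2) : adjugate A = !![A 1 1, -A 0 1; -A 1 0, A 0 0] := by
  rw [← Matrix.etaExpand_eq A, Matrix.adjugate_fin_two]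

lemma DiffOn.madj {f : ℂ → M2} {s : Set ℂ} (hf : DifferentiableOn ℂ f s) :
    DifferentiableOn ℂ (fun z => adjugate (f z)) s := by
  rw [mat_diffOn_iff] at *
  intro i j
  simp only [adj_entries]
  fin_cases i <;> fin_cases j <;> simp <;>
    first
      | exact hf 1 1 | exact (hf 0 1).neg | exact (hf 1 0).neg | exact hf 0 0
      | exact hf 0 1 | exact hf 1 0

lemma ContOn.madj {f : ℂ → M2} {s : Set ℂ} (hf : ContinuousOn f s) :
    ContinuousOn (fun z => adjugate (f z)) s := by
  rw [mat_contOn_iff] at *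
  intro i j
  simp only [adj_entries]
  fin_cases i <;> fin_cases j <;> simp <;>
    first
      | exact hf 1 1 | exact (hf 0 1).neg | exact (hf 1 0).neg | exact hf 0 0
      | exact hf 0 1 | exact hf 1 0

lemma adj_adj (A : M2) : adjugate (adjugate A) = A := by
  rw [Matrix.adjugate_adjugate _ (by norm_num : Fintype.card (Fin 2) ≠ 1)]
  norm_num

lemma det_adj (A : M2) : (adjugate A).det = A.det := by
  rw [Matrix.det_adjugate]
  norm_num

end IwasawaAux

end IwasawaAux
open IwasawaAux in
/-- Extension of the Iwasawa factors of a holomorphic loop on an annulus. -/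
theorem iwasawa_factors_extend
    (R : ℝ) (hR : 1 < R) (Φ F B : ℂ → Matrix (Fin 2) (Fin 2) ℂ)
    (hΦhol : DifferentiableOn ℂ Φ (annulus R))
    (hΦdet : ∀ lam ∈ annulus R, (Φ lam).det = 1)
    (hFcont : ContinuousOn F {lam : ℂ | ‖lam‖ = 1})
    (hFunit : ∀ lam : ℂ, ‖lam‖ = 1 → F lam ∈ Matrix.unitaryGroup (Fin 2) ℂ ∧
      (F lam).det = 1)
    (hBcont : ContinuousOn B (Metric.closedBall (0 : ℂ) 1))
    (hBhol : DifferentiableOn ℂ B (Metric.ball (0 : ℂ) 1))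
    (hBdet : ∀ lam ∈ Metric.closedBall (0 : ℂ) 1, (B lam).det = 1)
    (hBpos : (B 0) 1 0 = 0 ∧ ((B 0) 0 0).im = 0 ∧ 0 < ((B 0) 0 0).re ∧
      ((B 0) 1 1).im = 0 ∧ 0 < ((B 0) 1 1).re)
    (hIwa : ∀ lam : ℂ, ‖lam‖ = 1 → Φ lam = F lam * B lam) :
    ∃ Fhat Bhat : ℂ → Matrix (Fin 2) (Fin 2) ℂ,
      DifferentiableOn ℂ Fhat (annulus R) ∧
      (∀ lam ∈ annulus R, (Fhat lam).det = 1) ∧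
      (∀ lam : ℂ, ‖lam‖ = 1 → Fhat lam = F lam) ∧
      (∀ lam ∈ annulus R,
        (Fhat (((starRingEnd ℂ) lam)⁻¹)).conjTranspose = (Fhat lam)⁻¹) ∧
      DifferentiableOn ℂ Bhat (Metric.ball (0 : ℂ) R) ∧
      (∀ lam ∈ Metric.ball (0 : ℂ) R, (Bhat lam).det = 1) ∧
      (∀ lam ∈ Metric.closedBall (0 : ℂ) 1, Bhat lam = B lam) ∧
      (∀ lam ∈ annulus R, Φ lam = Fhat lam * Bhat lam) := by
  classical
  have hRpos : (0:ℝ) < R := lt_trans one_pos hR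
  have h1R : 1 / R < 1 := by rw [div_lt_one hRpos]; exact hR
  have h1Rpos : (0:ℝ) < 1 / R := by positivity
  have habs0 : ∀ z : ℂ, dist z (0:ℂ) = ‖z‖ := by
    intro z; rw [Complex.dist_eq, sub_zero]
  have hmem_cb : ∀ z : ℂ, z ∈ Metric.closedBall (0:ℂ) 1 ↔ ‖z‖ ≤ 1 := by
    intro z; rw [Metric.mem_closedBall, habs0]
  have hmem_ball : ∀ (z : ℂ) (r : ℝ), z ∈ Metric.ball (0:ℂ) r ↔ ‖z‖ < r := by
    intro z r; rw [Metric.mem_ball, habs0]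
  -- the reflection map
  set σ : ℂ → ℂ := fun lam => ((starRingEnd ℂ) lam)⁻¹ with hσdef
  have hσabs : ∀ z : ℂ, ‖σ z‖ = (‖z‖)⁻¹ := by
    intro z; rw [hσdef]; simp [map_inv₀]
  have hσσ : ∀ z : ℂ, σ (σ z) = z := by
    intro z; rw [hσdef]; simp [map_inv₀]
  have hσcirc : ∀ z : ℂ, ‖z‖ = 1 → σ z = z := by
    intro z hz
    have hml : (starRingEnd ℂ) z * z = 1 := by
      rw [mul_comm, Complex.mul_conj, Complex.normSq_eq_norm_sq, hz]; norm_num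
    exact inv_eq_of_mul_eq_one_right hml
  have hinvlt : ∀ a : ℝ, 0 < a → ((‖(0:ℂ)‖)⁻¹ = (‖(0:ℂ)‖)⁻¹) := by
    intro a _; rfl
  -- σ maps the annulus to itself
  have hann : ∀ z : ℂ, z ∈ annulus R ↔ 1 / R < ‖z‖ ∧ ‖z‖ < R := by
    intro z; rfl
  have habspos : ∀ z : ℂ, z ∈ annulus R → 0 < ‖z‖ := by
    intro z hz; exact lt_trans h1Rpos hz.1
  have hσann : ∀ z ∈ annulus R, σ z ∈ annulus R := by
    intro z hz
    have h0 : 0 < ‖z‖ := habspos z hz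
    rw [hann, hσabs]
    constructor
    · rw [one_div, inv_lt_inv₀ (lt_trans h0 hz.2) h0]
      exact hz.2
    · have : (‖z‖)⁻¹ < (1/R)⁻¹ := by
        rw [inv_lt_inv₀ h0 h1Rpos]
        exact hz.1
      rwa [one_div, inv_inv] at this
  -- definitions
  set Ψ : ℂ → Matrix (Fin 2) (Fin 2) ℂ := fun lam => (Φ (σ lam))ᴴ with hΨdef
  set Cm : ℂ → Matrix (Fin 2) (Fin 2) ℂ := fun lam => (B (σ lam))ᴴ with hCmdef
  set Ebig : ℂ → Matrix (Fin 2) (Fin 2) ℂ :=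
    fun lam => adjugate (Cm lam) * Ψ lam * Φ lam with hEdef
  set Bh : ℂ → Matrix (Fin 2) (Fin 2) ℂ :=
    fun lam => if ‖lam‖ ≤ 1 then B lam else Ebig lam with hBhdef
  set Fh : ℂ → Matrix (Fin 2) (Fin 2) ℂ := fun lam => Φ lam * adjugate (Bh lam) with hFhdef
  -- unitarity
  have hFF : ∀ z : ℂ, ‖z‖ = 1 → (F z)ᴴ * F z = 1 := by
    intro z hz
    have := ((hFunit z hz).1).1
    rwa [Matrix.star_eq_conjTranspose] at this
  -- the identity on the circle
  have key_circ : ∀ z : ℂ, ‖z‖ = 1 → Ebig z = B z := by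
    intro z hz
    have hσz := hσcirc z hz
    have hzcb : z ∈ Metric.closedBall (0:ℂ) 1 := (hmem_cb z).2 hz.le
    have hdetBH : ((B z)ᴴ).det = 1 := by
      rw [Matrix.det_conjTranspose, hBdet z hzcb, star_one]
    have h1 : adjugate ((B z)ᴴ) * (B z)ᴴ = 1 := by
      rw [Matrix.adjugate_mul, hdetBH, one_smul]
    have hΨz : Ψ z = (B z)ᴴ * (F z)ᴴ := by
      rw [hΨdef]; simp only [hσz, hIwa z hz, Matrix.conjTranspose_mul]
    have hCz : Cm z = (B z)ᴴ := by rw [hCmdef]; simp only [hσz]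
    rw [hEdef]
    simp only [hCz, hΨz, hIwa z hz]
    simp only [← Matrix.mul_assoc]
    rw [h1, Matrix.one_mul, Matrix.mul_assoc, ← Matrix.mul_assoc ((F z)ᴴ), hFF z hz,
      Matrix.one_mul]
  -- Bh on the two regions
  have hBh_le : ∀ z : ℂ, ‖z‖ ≤ 1 → Bh z = B z := by
    intro z hz; rw [hBhdef]; simp only [if_pos hz]
  have hBh_ge : ∀ z : ℂ, 1 ≤ ‖z‖ → Bh z = Ebig z := by
    intro z hz
    rcases eq_or_lt_of_le hz with heq | hlt
    · rw [hBhdef]; simp only [if_pos heq.symm.le]; exact (key_circ z heq.symm).symm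
    · rw [hBhdef]; simp only [if_neg (not_le.mpr hlt)]
  -- determinant facts
  have hdetΨ : ∀ z ∈ annulus R, (Ψ z).det = 1 := by
    intro z hz
    rw [hΨdef]
    simp only [Matrix.det_conjTranspose, hΦdet (σ z) (hσann z hz), star_one]
  have hdetCm : ∀ z : ℂ, 1 ≤ ‖z‖ → (Cm z).det = 1 := by
    intro z hz
    have h0 : 0 < ‖z‖ := lt_of_lt_of_le one_pos hz
    have hσcb : σ z ∈ Metric.closedBall (0:ℂ) 1 := by
      rw [hmem_cb, hσabs]
      exact inv_le_one_of_one_le₀ hz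
    rw [hCmdef]
    simp only [Matrix.det_conjTranspose, hBdet (σ z) hσcb, star_one]
  have hann_ge : ∀ z : ℂ, 1 ≤ ‖z‖ → ‖z‖ < R → z ∈ annulus R := by
    intro z h1 h2
    exact ⟨lt_of_lt_of_le h1R h1, h2⟩
  have hdetEbig : ∀ z : ℂ, 1 ≤ ‖z‖ → ‖z‖ < R → (Ebig z).det = 1 := by
    intro z h1 h2
    rw [hEdef]
    simp only [Matrix.det_mul, det_adj, hdetCm z h1, hdetΨ z (hann_ge z h1 h2),
      hΦdet z (hann_ge z h1 h2), mul_one, one_mul]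
  have hdetBh : ∀ z ∈ Metric.ball (0:ℂ) R, (Bh z).det = 1 := by
    intro z hz
    rw [hmem_ball] at hz
    by_cases hle : ‖z‖ ≤ 1
    · rw [hBh_le z hle]; exact hBdet z ((hmem_cb z).2 hle)
    · rw [hBh_ge z (le_of_not_ge hle)]
      exact hdetEbig z (le_of_not_ge hle) hz
  -- openness facts
  have hann_open : IsOpen (annulus R) := by
    have : annulus R = {z : ℂ | 1 / R < ‖z‖} ∩ {z : ℂ | ‖z‖ < R} := rfl
    rw [this]
    exact (isOpen_lt continuous_const continuous_norm).inter
      (isOpen_lt continuous_norm continuous_const)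
  set U : Set ℂ := {z : ℂ | 1 < ‖z‖ ∧ ‖z‖ < R} with hUdef
  have hU_open : IsOpen U := by
    have : U = {z : ℂ | 1 < ‖z‖} ∩ {z : ℂ | ‖z‖ < R} := rfl
    rw [this]
    exact (isOpen_lt continuous_const continuous_norm).inter
      (isOpen_lt continuous_norm continuous_const)
  have hU_ann : U ⊆ annulus R := fun z hz => hann_ge z hz.1.le hz.2
  -- entrywise differentiability of the reflected factors on U
  have hBentry : ∀ i j, DifferentiableOn ℂ (fun z => B z i j) (Metric.ball (0:ℂ) 1) :=
    mat_diffOn_iff.mp hBhol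
  have hΦentry : ∀ i j, DifferentiableOn ℂ (fun z => Φ z i j) (annulus R) :=
    mat_diffOn_iff.mp hΦhol
  have hrefl_diff : ∀ (G : ℂ → Matrix (Fin 2) (Fin 2) ℂ) (s : Set ℂ), IsOpen s →
      (∀ z ∈ U, σ z ∈ s) → DifferentiableOn ℂ G s →
      DifferentiableOn ℂ (fun z => (G (σ z))ᴴ) U := by
    intro G s hs hmaps hG
    rw [mat_diffOn_iff]
    intro i j
    intro z hz
    have hz0 : z ≠ 0 := by
      intro h0
      rw [h0] at hz
      have h1 : (1:ℝ) < ‖(0:ℂ)‖ := hz.1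
      simp at h1; linarith
    have hcz : (starRingEnd ℂ) z ≠ 0 := by
      rw [starRingEnd_apply, Ne, star_eq_zero]; exact hz0
    have hinv : DifferentiableAt ℂ (fun u : ℂ => u⁻¹) ((starRingEnd ℂ) z) :=
      differentiableAt_id.inv hcz
    have hGe : DifferentiableAt ℂ (fun v => G v j i) (((starRingEnd ℂ) z)⁻¹) :=
      ((mat_diffOn_iff.mp hG j i).differentiableAt (hs.mem_nhds (hmaps z hz)))
    have hcomp : DifferentiableAt ℂ (fun u : ℂ => G u⁻¹ j i) ((starRingEnd ℂ) z) :=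
      hGe.comp _ hinv
    have hmain := differentiableAt_conj_comp hcomp
    have heq : (fun w => (G (σ w))ᴴ i j)
        = fun w => (starRingEnd ℂ) (G (((starRingEnd ℂ) w)⁻¹) j i) := by
      funext w
      rw [hσdef]
      simp [Matrix.conjTranspose_apply, Complex.star_def]
    rw [heq]
    exact hmain.differentiableWithinAt
  have hσU_cb : ∀ z ∈ U, σ z ∈ Metric.ball (0:ℂ) 1 := by
    intro z hz
    rw [hmem_ball, hσabs]
    rw [inv_lt_one_iff₀]
    right; exact hz.1
  have hσU_ann : ∀ z ∈ U, σ z ∈ annulus R := fun z hz => hσann z (hU_ann hz)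
  have hCmdiff : DifferentiableOn ℂ Cm U := by
    rw [hCmdef]; exact hrefl_diff B _ Metric.isOpen_ball hσU_cb hBhol
  have hΨdiff : DifferentiableOn ℂ Ψ U := by
    rw [hΨdef]; exact hrefl_diff Φ _ hann_open hσU_ann hΦhol
  have hEdiffU : DifferentiableOn ℂ Ebig U := by
    rw [hEdef]
    exact DiffOn.mmul (DiffOn.mmul (DiffOn.madj hCmdiff) hΨdiff) (hΦhol.mono hU_ann)
  -- continuity of Ebig on {1 ≤ |z| < R}
  set V : Set ℂ := {z : ℂ | 1 ≤ ‖z‖ ∧ ‖z‖ < R} with hVdef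
  have hV_ann : V ⊆ annulus R := fun z hz => hann_ge z hz.1 hz.2
  have hσcont : ContinuousOn σ V := by
    rw [hσdef]
    refine (Complex.continuous_conj.continuousOn).inv₀ ?_
    intro z hz
    rw [starRingEnd_apply, Ne, star_eq_zero]
    intro h0
    rw [h0] at hz
    have h1 : (1:ℝ) ≤ ‖(0:ℂ)‖ := hz.1
    simp at h1; linarith
  have hrefl_cont : ∀ (G : ℂ → Matrix (Fin 2) (Fin 2) ℂ) (s : Set ℂ),
      (∀ z ∈ V, σ z ∈ s) → ContinuousOn G s →
      ContinuousOn (fun z => (G (σ z))ᴴ) V := by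
    intro G s hmaps hG
    rw [mat_contOn_iff]
    intro i j
    have heq : (fun w => (G (σ w))ᴴ i j) = fun w => (starRingEnd ℂ) (G (σ w) j i) := by
      funext w
      simp [Matrix.conjTranspose_apply, Complex.star_def]
    rw [heq]
    refine Complex.continuous_conj.comp_continuousOn ?_
    exact ((mat_contOn_iff.mp hG j i).comp hσcont hmaps)
  have hσV_cb : ∀ z ∈ V, σ z ∈ Metric.closedBall (0:ℂ) 1 := by
    intro z hz
    rw [hmem_cb, hσabs]
    exact inv_le_one_of_one_le₀ hz.1
  have hσV_ann : ∀ z ∈ V, σ z ∈ annulus R := fun z hz => hσann z (hV_ann hz)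
  have hEcontV : ContinuousOn Ebig V := by
    rw [hEdef]
    refine ContOn.mmul (ContOn.mmul (ContOn.madj ?_) ?_) (hΦhol.continuousOn.mono hV_ann)
    · rw [hCmdef]; exact hrefl_cont B _ hσV_cb hBcont
    · rw [hΨdef]; exact hrefl_cont Φ _ hσV_ann hΦhol.continuousOn
  -- continuity of Bh on closed balls of radius < R
  have hBhcont : ∀ ρ : ℝ, 1 < ρ → ρ < R → ContinuousOn Bh (Metric.closedBall (0:ℂ) ρ) := by
    intro ρ hρ1 hρR
    intro x hx
    have hsplit : Metric.closedBall (0:ℂ) ρ ⊆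
        (Metric.closedBall (0:ℂ) ρ ∩ {z : ℂ | ‖z‖ ≤ 1}) ∪
        (Metric.closedBall (0:ℂ) ρ ∩ {z : ℂ | 1 ≤ ‖z‖}) := by
      intro z hz
      rcases le_total (‖z‖) 1 with h | h
      · exact Or.inl ⟨hz, h⟩
      · exact Or.inr ⟨hz, h⟩
    have hclosed1 : IsClosed (Metric.closedBall (0:ℂ) ρ ∩ {z : ℂ | ‖z‖ ≤ 1}) :=
      Metric.isClosed_closedBall.inter (isClosed_le continuous_norm continuous_const)
    have hclosed2 : IsClosed (Metric.closedBall (0:ℂ) ρ ∩ {z : ℂ | 1 ≤ ‖z‖}) :=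
      Metric.isClosed_closedBall.inter (isClosed_le continuous_const continuous_norm)
    have h1 : ContinuousWithinAt Bh
        (Metric.closedBall (0:ℂ) ρ ∩ {z : ℂ | ‖z‖ ≤ 1}) x := by
      by_cases hxm : x ∈ Metric.closedBall (0:ℂ) ρ ∩ {z : ℂ | ‖z‖ ≤ 1}
      · have hsub : Metric.closedBall (0:ℂ) ρ ∩ {z : ℂ | ‖z‖ ≤ 1} ⊆
            Metric.closedBall (0:ℂ) 1 := by
          intro z hz; exact (hmem_cb z).2 hz.2
        refine ((hBcont.mono hsub) x hxm).congr ?_ ?_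
        · intro z hz; exact hBh_le z hz.2
        · exact hBh_le x hxm.2
      · exact continuousWithinAt_of_notMem_closure (by rwa [hclosed1.closure_eq])
    have h2 : ContinuousWithinAt Bh
        (Metric.closedBall (0:ℂ) ρ ∩ {z : ℂ | 1 ≤ ‖z‖}) x := by
      by_cases hxm : x ∈ Metric.closedBall (0:ℂ) ρ ∩ {z : ℂ | 1 ≤ ‖z‖}
      · have hsub : Metric.closedBall (0:ℂ) ρ ∩ {z : ℂ | 1 ≤ ‖z‖} ⊆ V := by
          intro z hz
          refine ⟨hz.2, ?_⟩
          have : ‖z‖ ≤ ρ := by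
            have := hz.1; rwa [Metric.mem_closedBall, habs0] at this
          linarith
        refine ((hEcontV.mono hsub) x hxm).congr ?_ ?_
        · intro z hz; exact hBh_ge z hz.2
        · exact hBh_ge x hxm.2
      · exact continuousWithinAt_of_notMem_closure (by rwa [hclosed2.closure_eq])
    exact (h1.union h2).mono hsplit
  -- differentiability of Bh off the circle
  have hBhdAt : ∀ z ∈ Metric.ball (0:ℂ) R, ‖z‖ ≠ 1 → DifferentiableAt ℂ Bh z := by
    intro z hz hz1
    rw [hmem_ball] at hz
    rcases lt_or_gt_of_ne hz1 with hlt | hgt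
    · have hzb : z ∈ Metric.ball (0:ℂ) 1 := (hmem_ball z 1).2 hlt
      have hBz : DifferentiableAt ℂ B z :=
        hBhol.differentiableAt (Metric.isOpen_ball.mem_nhds hzb)
      refine hBz.congr_of_eventuallyEq ?_
      filter_upwards [Metric.isOpen_ball.mem_nhds hzb] with y hy
      exact hBh_le y ((hmem_ball y 1).1 hy).le
    · have hzU : z ∈ U := ⟨hgt, hz⟩
      have hEz : DifferentiableAt ℂ Ebig z :=
        hEdiffU.differentiableAt (hU_open.mem_nhds hzU)
      refine hEz.congr_of_eventuallyEq ?_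
      filter_upwards [hU_open.mem_nhds hzU] with y hy
      exact hBh_ge y hy.1.le
  -- glue: Bh is differentiable on the whole ball of radius R
  have hBhdiff : DifferentiableOn ℂ Bh (Metric.ball (0:ℂ) R) := by
    intro w hw
    have hwR : ‖w‖ < R := (hmem_ball w R).1 hw
    set ρ : ℝ := (max (‖w‖) 1 + R) / 2 with hρdef
    have hmax : max (‖w‖) 1 < R := max_lt hwR hR
    have hρ1 : 1 < ρ := by
      have := le_max_right (‖w‖) 1
      rw [hρdef]; nlinarith [le_max_right (‖w‖) 1]
    have hρR : ρ < R := by rw [hρdef]; linarith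
    have hwρ : ‖w‖ < ρ := by
      have := le_max_left (‖w‖) 1
      rw [hρdef]; nlinarith
    have hglue := glue_circle hρ1 (hBhcont ρ hρ1 hρR) ?_
    · exact (hglue.differentiableAt
        (Metric.isOpen_ball.mem_nhds ((hmem_ball w ρ).2 hwρ))).differentiableWithinAt
    · intro x hx hx1
      refine hBhdAt x ?_ hx1
      have := (hmem_ball x ρ).1 hx
      exact (hmem_ball x R).2 (lt_trans this hρR)
  -- Fh facts
  have hann_ball : annulus R ⊆ Metric.ball (0:ℂ) R := by
    intro z hz; exact (hmem_ball z R).2 hz.2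
  have hFhdiff : DifferentiableOn ℂ Fh (annulus R) := by
    rw [hFhdef]
    exact DiffOn.mmul hΦhol (DiffOn.madj (hBhdiff.mono hann_ball))
  have hFhdet : ∀ z ∈ annulus R, (Fh z).det = 1 := by
    intro z hz
    rw [hFhdef]
    simp only [Matrix.det_mul, det_adj, hΦdet z hz, hdetBh z (hann_ball hz), one_mul]
  have hFhF : ∀ z : ℂ, ‖z‖ = 1 → Fh z = F z := by
    intro z hz
    rw [hFhdef]
    simp only [hBh_le z hz.le, hIwa z hz]
    rw [Matrix.mul_assoc, Matrix.mul_adjugate, hBdet z ((hmem_cb z).2 hz.le), one_smul,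
      Matrix.mul_one]
  -- the reflection product
  have hprod : ∀ z ∈ annulus R, Fh z * (Fh (σ z))ᴴ = 1 := by
    intro z hz
    have hz0 : 0 < ‖z‖ := habspos z hz
    have hσz_ann : σ z ∈ annulus R := hσann z hz
    have hFhσ : (Fh (σ z))ᴴ = adjugate ((Bh (σ z))ᴴ) * Ψ z := by
      rw [hFhdef]
      simp only [Matrix.conjTranspose_mul, Matrix.adjugate_conjTranspose, hΨdef]
    rcases le_or_gt 1 (‖z‖) with h1z | h1z
    · -- case 1 ≤ |z|
      have hσz_le : ‖σ z‖ ≤ 1 := by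
        rw [hσabs]; exact inv_le_one_of_one_le₀ h1z
      have hBσ : (Bh (σ z))ᴴ = Cm z := by
        rw [hBh_le (σ z) hσz_le, hCmdef]
      have hBhz : Bh z = adjugate (Cm z) * Ψ z * Φ z := by
        rw [hBh_ge z h1z, hEdef]
      rw [hFhσ, hBσ, hFhdef]
      simp only [hBhz, Matrix.adjugate_mul_distrib, adj_adj]
      simp only [← Matrix.mul_assoc]
      have e1 : Φ z * adjugate (Φ z) = 1 := by
        rw [Matrix.mul_adjugate, hΦdet z hz, one_smul]
      have e2 : Cm z * adjugate (Cm z) = 1 := by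
        rw [Matrix.mul_adjugate, hdetCm z h1z, one_smul]
      have e3 : adjugate (Ψ z) * Ψ z = 1 := by
        rw [Matrix.adjugate_mul, hdetΨ z hz, one_smul]
      rw [e1, Matrix.one_mul, Matrix.mul_assoc (adjugate (Ψ z)) (Cm z) (adjugate (Cm z)), e2,
        Matrix.mul_one, e3]
    · -- case |z| < 1
      have h1σ : 1 ≤ ‖σ z‖ := by
        rw [hσabs]
        rw [le_inv_comm₀ one_pos hz0]
        simpa using h1z.le
      have hzcb : z ∈ Metric.closedBall (0:ℂ) 1 := (hmem_cb z).2 h1z.le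
      have hc1 : Cm (σ z) = (B z)ᴴ := by rw [hCmdef]; simp only [hσσ]
      have hp1 : Ψ (σ z) = (Φ z)ᴴ := by rw [hΨdef]; simp only [hσσ]
      have hp2 : Φ (σ z) = (Ψ z)ᴴ := by
        rw [hΨdef]; simp only [Matrix.conjTranspose_conjTranspose]
      have hT : (Bh (σ z))ᴴ = Ψ z * (Φ z * adjugate (B z)) := by
        rw [hBh_ge (σ z) h1σ, hEdef]
        simp only [hc1, hp1, hp2]
        simp only [Matrix.conjTranspose_mul, Matrix.conjTranspose_conjTranspose,
          ← Matrix.adjugate_conjTranspose]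
      rw [hFhσ, hT, hFhdef]
      simp only [hBh_le z h1z.le, Matrix.adjugate_mul_distrib, adj_adj]
      simp only [← Matrix.mul_assoc]
      have e0 : adjugate (B z) * B z = 1 := by
        rw [Matrix.adjugate_mul, hBdet z hzcb, one_smul]
      have e1 : Φ z * adjugate (Φ z) = 1 := by
        rw [Matrix.mul_adjugate, hΦdet z hz, one_smul]
      have e3 : adjugate (Ψ z) * Ψ z = 1 := by
        rw [Matrix.adjugate_mul, hdetΨ z hz, one_smul]
      rw [Matrix.mul_assoc (Φ z) (adjugate (B z)) (B z), e0, Matrix.mul_one, e1,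
        Matrix.one_mul, e3]
  -- assemble
  refine ⟨Fh, Bh, hFhdiff, hFhdet, hFhF, ?_, hBhdiff, hdetBh, ?_, ?_⟩
  · intro lam hlam
    exact (Matrix.inv_eq_right_inv (hprod lam hlam)).symm
  · intro lam hlam
    exact hBh_le lam ((hmem_cb lam).1 hlam)
  · intro lam hlam
    rw [hFhdef]
    simp only []
    rw [Matrix.mul_assoc, Matrix.adjugate_mul, hdetBh lam (hann_ball hlam), one_smul,
      Matrix.mul_one]
end

section
/- Derivative of the monodromy: Let n ≥ 1, let I ⊆ ℝ be an open interval containing t₀, and let ξ : I × [0,1] → M_n(ℂ) be continuous, differentiable in t with ∂ξ/∂t continuous on I × [0,1]. For each t ∈ I let Φ_t : [0,1] → GL_n(ℂ) be differentiable with Φ_t'(s) = Φ_t(s)·ξ(t,s) for all s, and suppose t ↦ Φ_t(0) is continuous at t₀. Define the monodromy M(t) = Φ_t(1)·Φ_t(0)⁻¹, and assume the commutation condition M(t₀)·Φ_{t₀}(0)·Φ_t(0)⁻¹ = Φ_{t₀}(0)·Φ_t(0)⁻¹·M(t₀) for all t ∈ I. Then t ↦ M(t) is differentiable at t₀ and M'(t₀)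 = ( ∫₀¹ Φ_{t₀}(s)·(∂ξ/∂t)(t₀,s)·Φ_{t₀}(s)⁻¹ ds )·M(t₀). -/
open Matrix Set MeasureTheory intervalIntegral Filter

attribute [local instance] Matrix.normedAddCommGroup Matrix.normedSpace

lemma mono_norm_mul_le {n : ℕ} (A B : Matrix (Fin n) (Fin n) ℂ) :
    ‖A * B‖ ≤ n * ‖A‖ * ‖B‖ := by
  refine (Matrix.norm_le_iff (by positivity)).2 fun i j => ?_
  calc ‖(A * B) i j‖ = ‖∑ k, A i k * B k j‖ := by rw [Matrix.mul_apply]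
    _ ≤ ∑ k, ‖A i k * B k j‖ := norm_sum_le _ _
    _ ≤ ∑ _k : Fin n, ‖A‖ * ‖B‖ := Finset.sum_le_sum fun k _ => by
        rw [norm_mul]
        exact mul_le_mul (Matrix.norm_entry_le_entrywise_sup_norm A)
          (Matrix.norm_entry_le_entrywise_sup_norm B) (norm_nonneg _) (norm_nonneg _)
    _ = n * ‖A‖ * ‖B‖ := by simp [mul_assoc]

lemma mono_isBoundedBilinearMap_mul {n : ℕ} :
    IsBoundedBilinearMap ℝ
      (fun p : Matrix (Fin n) (Fin n) ℂ × Matrix (Fin n) (Fin n) ℂ => p.1 * p.2) where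
  add_left x₁ x₂ y := add_mul _ _ _
  smul_left c x y := Matrix.smul_mul c x y
  add_right x y₁ y₂ := mul_add _ _ _
  smul_right c x y := Matrix.mul_smul x c y
  bound := ⟨n + 1, by positivity, fun x y => (mono_norm_mul_le x y).trans (by
    have h1 : (0:ℝ) ≤ ‖x‖ * ‖y‖ := by positivity
    nlinarith [norm_nonneg x, norm_nonneg y])⟩

lemma mono_hasDerivWithinAt_mul {n : ℕ} {f g : ℝ → Matrix (Fin n) (Fin n) ℂ}
    {f' g' : Matrix (Fin n) (Fin n) ℂ} {s : Set ℝ} {x : ℝ}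
    (hf : HasDerivWithinAt f f' s x) (hg : HasDerivWithinAt g g' s x) :
    HasDerivWithinAt (fun y => f y * g y) (f x * g' + f' * g x) s x := by
  have h := (mono_isBoundedBilinearMap_mul.hasFDerivAt (f x, g x)).comp_hasDerivWithinAt (f := fun y => (f y, g y)) x (hf.prodMk hg)
  exact h

noncomputable instance mono_enormed {n : ℕ} : ENormedAddCommMonoid (Matrix (Fin n) (Fin n) ℂ) :=
  NormedAddCommGroup.toENormedAddCommMonoid

noncomputable instance mono_pms {n : ℕ} : TopologicalSpace.PseudoMetrizableSpace (Matrix (Fin n) (Fin n) ℂ) :=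
  inferInstanceAs (TopologicalSpace.PseudoMetrizableSpace (Fin n → Fin n → ℂ))

set_option maxHeartbeats 1600000 in
/-- Derivative of the monodromy of a C¹ family of linear ODEs along a loop. -/
theorem monodromy_derivative
    (n : ℕ) (hn : 1 ≤ n) (a b t₀ : ℝ) (ht₀ : t₀ ∈ Set.Ioo a b)
    (ξ ξ' Φ : ℝ → ℝ → Matrix (Fin n) (Fin n) ℂ)
    (hξcont : ContinuousOn (fun p : ℝ × ℝ => ξ p.1 p.2) (Set.Ioo a b ×ˢ Set.Icc 0 1))
    (hξderiv : ∀ s ∈ Set.Icc (0 : ℝ) 1, ∀ t ∈ Set.Ioo a b,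
      HasDerivAt (fun t' => ξ t' s) (ξ' t s) t)
    (hξ'cont : ContinuousOn (fun p : ℝ × ℝ => ξ' p.1 p.2) (Set.Ioo a b ×ˢ Set.Icc 0 1))
    (hΦode : ∀ t ∈ Set.Ioo a b, ∀ s ∈ Set.Icc (0 : ℝ) 1,
      HasDerivAt (fun s' => Φ t s') (Φ t s * ξ t s) s)
    (hΦunit : ∀ t ∈ Set.Ioo a b, ∀ s ∈ Set.Icc (0 : ℝ) 1, IsUnit (Φ t s))
    (hΦ0cont : ContinuousAt (fun t => Φ t 0) t₀)
    (hcomm : ∀ t ∈ Set.Ioo a b,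
      (Φ t₀ 1 * (Φ t₀ 0)⁻¹) * (Φ t₀ 0 * (Φ t 0)⁻¹) =
        (Φ t₀ 0 * (Φ t 0)⁻¹) * (Φ t₀ 1 * (Φ t₀ 0)⁻¹)) :
    HasDerivAt (fun t => Φ t 1 * (Φ t 0)⁻¹)
      ((∫ s in (0 : ℝ)..1, Φ t₀ s * ξ' t₀ s * (Φ t₀ s)⁻¹) *
        (Φ t₀ 1 * (Φ t₀ 0)⁻¹)) t₀ := by
  have ht₀' : t₀ ∈ Set.Ioo a b := ht₀
  -- a closed interval J around t₀ inside (a,b) on which ‖Φ t 0‖ is bounded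
  have hev : ∀ᶠ t in nhds t₀, t ∈ Set.Ioo a b ∧ ‖Φ t 0‖ ≤ ‖Φ t₀ 0‖ + 1 := by
    have h1 : ∀ᶠ t in nhds t₀, Φ t 0 ∈ Metric.ball (Φ t₀ 0) 1 :=
      hΦ0cont (Metric.ball_mem_nhds _ one_pos)
    filter_upwards [isOpen_Ioo.mem_nhds ht₀', h1] with t h2 h3
    refine ⟨h2, ?_⟩
    have h4 : ‖Φ t 0 - Φ t₀ 0‖ < 1 := mem_ball_iff_norm.1 h3
    have h5 := norm_sub_norm_le (Φ t 0) (Φ t₀ 0)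
    linarith
  obtain ⟨ε, hε, hball⟩ := Metric.eventually_nhds_iff.1 hev
  have hδ : 0 < ε / 2 := by positivity
  set δ : ℝ := ε / 2 with hδdef
  have hJmem : ∀ t ∈ Set.Icc (t₀ - δ) (t₀ + δ),
      t ∈ Set.Ioo a b ∧ ‖Φ t 0‖ ≤ ‖Φ t₀ 0‖ + 1 := by
    intro t ht
    apply hball
    rw [Real.dist_eq, abs_sub_lt_iff]
    obtain ⟨h1, h2⟩ := ht
    constructor <;> simp only [hδdef] at h1 h2 ⊢ <;> linarith
  have ht₀J : t₀ ∈ Set.Icc (t₀ - δ) (t₀ + δ) := ⟨by linarith, by linarith⟩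
  have hJsub : ∀ t ∈ Set.Icc (t₀ - δ) (t₀ + δ), t ∈ Set.Ioo a b := fun t ht => (hJmem t ht).1
  have hJnhds : Set.Icc (t₀ - δ) (t₀ + δ) ∈ nhds t₀ := Icc_mem_nhds (by linarith) (by linarith)
  -- bounds on ξ and ξ' on the compact J × [0,1]
  have hcompact : IsCompact (Set.Icc (t₀ - δ) (t₀ + δ) ×ˢ Set.Icc (0:ℝ) 1) :=
    isCompact_Icc.prod isCompact_Icc
  have hsubset : Set.Icc (t₀ - δ) (t₀ + δ) ×ˢ Set.Icc (0:ℝ) 1 ⊆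
      Set.Ioo a b ×ˢ Set.Icc (0:ℝ) 1 := Set.prod_mono_left hJsub
  obtain ⟨K₁, hK₁⟩ := hcompact.exists_bound_of_continuousOn (hξcont.mono hsubset)
  obtain ⟨K₂, hK₂⟩ := hcompact.exists_bound_of_continuousOn (hξ'cont.mono hsubset)
  have hKξ0 : (0:ℝ) ≤ max K₁ 0 := le_max_right _ _
  have hK'0 : (0:ℝ) ≤ max K₂ 0 := le_max_right _ _
  have hKξ : ∀ t ∈ Set.Icc (t₀ - δ) (t₀ + δ), ∀ s ∈ Set.Icc (0:ℝ) 1, ‖ξ t s‖ ≤ max K₁ 0 :=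
    fun t ht s hs => le_trans (hK₁ (t, s) ⟨ht, hs⟩) (le_max_left _ _)
  have hK' : ∀ t ∈ Set.Icc (t₀ - δ) (t₀ + δ), ∀ s ∈ Set.Icc (0:ℝ) 1, ‖ξ' t s‖ ≤ max K₂ 0 :=
    fun t ht s hs => le_trans (hK₂ (t, s) ⟨ht, hs⟩) (le_max_left _ _)
  -- continuity in s
  have hΦcont : ∀ t ∈ Set.Ioo a b, ContinuousOn (fun s => Φ t s) (Set.Icc 0 1) :=
    fun t ht s hs => ((hΦode t ht s hs).continuousAt).continuousWithinAt
  have hξscont : ∀ t ∈ Set.Ioo a b, ContinuousOn (fun s => ξ t s) (Set.Icc 0 1) := by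
    intro t ht
    have h1 : ContinuousOn (fun s : ℝ => ((t, s) : ℝ × ℝ)) (Set.Icc 0 1) :=
      (Continuous.prodMk_right t).continuousOn
    exact hξcont.comp h1 fun s hs => ⟨ht, hs⟩
  -- the inverse of Φ t₀
  have hdet : ∀ s ∈ Set.Icc (0:ℝ) 1, IsUnit (Φ t₀ s).det :=
    fun s hs => (Matrix.isUnit_iff_isUnit_det _).1 (hΦunit t₀ ht₀' s hs)
  have hInv : ContinuousOn (fun s => (Φ t₀ s)⁻¹) (Set.Icc 0 1) := by
    have h1 : ContinuousOn (fun s => ((Φ t₀ s).det)⁻¹ • (Φ t₀ s).adjugate) (Set.Icc 0 1) := by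
      refine ContinuousOn.smul (f := fun s => ((Φ t₀ s).det)⁻¹) (g := fun s => (Φ t₀ s).adjugate)
        (ContinuousOn.inv₀ ?_ ?_) ?_
      · exact (continuous_id.matrix_det).comp_continuousOn (hΦcont t₀ ht₀')
      · exact fun s hs => (hdet s hs).ne_zero
      · exact (continuous_id.matrix_adjugate).comp_continuousOn (hΦcont t₀ ht₀')
    refine h1.congr fun s hs => ?_
    rw [Matrix.inv_def, Ring.inverse_eq_inv']
  obtain ⟨B₂, hB₂⟩ := (isCompact_Icc (a := (0:ℝ)) (b := 1)).exists_bound_of_continuousOn hInv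
  have hBinv0 : (0:ℝ) ≤ max B₂ 0 := le_max_right _ _
  have hBinv : ∀ s ∈ Set.Icc (0:ℝ) 1, ‖(Φ t₀ s)⁻¹‖ ≤ max B₂ 0 :=
    fun s hs => le_trans (hB₂ s hs) (le_max_left _ _)
  -- bound on Φ on J × [0,1] via Gronwall
  have hC0 : (0:ℝ) < ‖Φ t₀ 0‖ + 1 := by positivity
  have hCΦ0 : (0:ℝ) ≤ (‖Φ t₀ 0‖ + 1) * Real.exp ((n:ℝ) * max K₁ 0) := by positivity
  have hΦbdd : ∀ t ∈ Set.Icc (t₀ - δ) (t₀ + δ), ∀ s ∈ Set.Icc (0:ℝ) 1,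
      ‖Φ t s‖ ≤ (‖Φ t₀ 0‖ + 1) * Real.exp ((n:ℝ) * max K₁ 0) := by
    intro t ht s hs
    have h := norm_le_gronwallBound_of_norm_deriv_right_le
      (f := fun s => Φ t s) (f' := fun s => Φ t s * ξ t s)
      (δ := ‖Φ t₀ 0‖ + 1) (K := (n:ℝ) * max K₁ 0) (ε := 0) (a := 0) (b := 1)
      (hΦcont t (hJsub t ht))
      (fun x hx => (hΦode t (hJsub t ht) x (Set.Ico_subset_Icc_self hx)).hasDerivWithinAt)
      (hJmem t ht).2
      (fun x hx => by
        have h1 := mono_norm_mul_le (Φ t x) (ξ t x)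
        have h2 := hKξ t ht x (Set.Ico_subset_Icc_self hx)
        have h3 : (0:ℝ) ≤ ‖Φ t x‖ := norm_nonneg _
        have h4 : (0:ℝ) ≤ (n:ℝ) := Nat.cast_nonneg n
        show ‖Φ t x * ξ t x‖ ≤ (n:ℝ) * max K₁ 0 * ‖Φ t x‖ + 0
        rw [add_zero]
        nlinarith [mul_le_mul_of_nonneg_left h2 (mul_nonneg h4 h3)]) s hs
    rw [gronwallBound_ε0] at h
    refine h.trans ?_
    have h5 : (n:ℝ) * max K₁ 0 * (s - 0) ≤ (n:ℝ) * max K₁ 0 := by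
      have h4 : (0:ℝ) ≤ (n:ℝ) * max K₁ 0 := by positivity
      nlinarith [hs.1, hs.2]
    have h6 := Real.exp_le_exp.2 h5
    nlinarith [Real.exp_pos ((n:ℝ) * max K₁ 0 * (s - 0))]
  -- mean value bound for ξ differences
  have hξMVT : ∀ u ∈ Set.Icc (0:ℝ) 1, ∀ t ∈ Set.Icc (t₀ - δ) (t₀ + δ),
      ‖ξ t u - ξ t₀ u‖ ≤ max K₂ 0 * |t - t₀| := by
    intro u hu t ht
    have h := (convex_Icc (t₀ - δ) (t₀ + δ)).norm_image_sub_le_of_norm_hasDerivWithin_le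
      (f := fun t => ξ t u) (f' := fun t => ξ' t u)
      (fun x hx => (hξderiv u hu x (hJsub x hx)).hasDerivWithinAt)
      (fun x hx => hK' x hx u hu) ht₀J ht
    simpa [Real.norm_eq_abs] using h
  -- the Duhamel integrand
  set g : ℝ → ℝ → Matrix (Fin n) (Fin n) ℂ :=
    fun t u => Φ t u * (ξ t u - ξ t₀ u) * (Φ t₀ u)⁻¹ with hgdef
  have hgcont : ∀ t ∈ Set.Icc (t₀ - δ) (t₀ + δ), ContinuousOn (g t) (Set.Icc 0 1) := by
    intro t ht
    exact ((hΦcont t (hJsub t ht)).mul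
      (((hξscont t (hJsub t ht)).sub (hξscont t₀ ht₀'))) ).mul hInv
  have hgint : ∀ t ∈ Set.Icc (t₀ - δ) (t₀ + δ), ∀ s ∈ Set.Icc (0:ℝ) 1,
      IntervalIntegrable (g t) volume 0 s := by
    intro t ht s hs
    apply ContinuousOn.intervalIntegrable
    apply (hgcont t ht).mono
    rw [Set.uIcc_of_le hs.1]
    exact Set.Icc_subset_Icc le_rfl hs.2
  have hWderiv : ∀ t ∈ Set.Icc (t₀ - δ) (t₀ + δ), ∀ s ∈ Set.Icc (0:ℝ) 1,
      HasDerivWithinAt (fun s => Φ t 0 * (Φ t₀ 0)⁻¹ + ∫ u in (0:ℝ)..s, g t u)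
        (g t s) (Set.Icc 0 1) s := by
    intro t ht s hs
    haveI : Fact (s ∈ Set.Icc (0:ℝ) 1) := ⟨hs⟩
    have h := intervalIntegral.integral_hasDerivWithinAt_right
      (s := Set.Icc (0:ℝ) 1) (t := Set.Icc (0:ℝ) 1) (hgint t ht s hs)
      ⟨Set.Icc 0 1, self_mem_nhdsWithin,
        ((hgcont t ht).aestronglyMeasurable measurableSet_Icc)⟩
      (hgcont t ht s hs)
    exact h.const_add _
  -- Duhamel's formula
  have hDuhamel : ∀ t ∈ Set.Icc (t₀ - δ) (t₀ + δ), ∀ s ∈ Set.Icc (0:ℝ) 1,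
      Φ t s = (Φ t 0 * (Φ t₀ 0)⁻¹ + ∫ u in (0:ℝ)..s, g t u) * Φ t₀ s := by
    intro t ht
    have hEderiv : ∀ s ∈ Set.Icc (0:ℝ) 1,
        HasDerivWithinAt
          (fun s => Φ t s - (Φ t 0 * (Φ t₀ 0)⁻¹ + ∫ u in (0:ℝ)..s, g t u) * Φ t₀ s)
          ((Φ t s - (Φ t 0 * (Φ t₀ 0)⁻¹ + ∫ u in (0:ℝ)..s, g t u) * Φ t₀ s) * ξ t₀ s)
          (Set.Icc 0 1) s := by
      intro s hs
      have h1 := (hΦode t (hJsub t ht) s hs).hasDerivWithinAt (s := Set.Icc (0:ℝ) 1)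
      have h2 := mono_hasDerivWithinAt_mul (hWderiv t ht s hs)
        ((hΦode t₀ ht₀' s hs).hasDerivWithinAt (s := Set.Icc (0:ℝ) 1))
      have h3 := h1.sub h2
      refine h3.congr_deriv ?_
      have hcancel : (Φ t₀ s)⁻¹ * Φ t₀ s = 1 := Matrix.nonsing_inv_mul _ (hdet s hs)
      have h4 : g t s * Φ t₀ s = Φ t s * ξ t s - Φ t s * ξ t₀ s := by
        simp only [hgdef]
        rw [mul_assoc, hcancel, mul_one, mul_sub]
      rw [h4]
      noncomm_ring
    have hEcont : ContinuousOn
        (fun s => Φ t s - (Φ t 0 * (Φ t₀ 0)⁻¹ + ∫ u in (0:ℝ)..s, g t u) * Φ t₀ s)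
        (Set.Icc 0 1) := fun s hs => (hEderiv s hs).continuousWithinAt
    have hE0 : Φ t 0 - (Φ t 0 * (Φ t₀ 0)⁻¹ + ∫ u in (0:ℝ)..(0:ℝ), g t u) * Φ t₀ 0 = 0 := by
      rw [intervalIntegral.integral_same, add_zero, mul_assoc,
        Matrix.nonsing_inv_mul _ (hdet 0 ⟨le_rfl, zero_le_one⟩), mul_one, sub_self]
    have hgr := norm_le_gronwallBound_of_norm_deriv_right_le
      (δ := 0) (K := (n:ℝ) * max K₁ 0) (ε := 0) (a := 0) (b := 1)
      hEcont
      (fun x hx => (hEderiv x (Set.Ico_subset_Icc_self hx)).mono_of_mem_nhdsWithin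
        (Icc_mem_nhdsGE_of_mem hx))
      (by rw [hE0]; simp)
      (fun x hx => by
        have h1 := mono_norm_mul_le
          (Φ t x - (Φ t 0 * (Φ t₀ 0)⁻¹ + ∫ u in (0:ℝ)..x, g t u) * Φ t₀ x) (ξ t₀ x)
        have h2 := hKξ t₀ ht₀J x (Set.Ico_subset_Icc_self hx)
        have h3 : (0:ℝ) ≤ ‖Φ t x - (Φ t 0 * (Φ t₀ 0)⁻¹ + ∫ u in (0:ℝ)..x, g t u) * Φ t₀ x‖ :=
          norm_nonneg _
        have h4 : (0:ℝ) ≤ (n:ℝ) := Nat.cast_nonneg n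
        rw [add_zero]
        nlinarith [mul_le_mul_of_nonneg_left h2 (mul_nonneg h4 h3)])
    intro s hs
    have h5 := hgr s hs
    rw [gronwallBound_ε0, zero_mul] at h5
    have h6 : Φ t s - (Φ t 0 * (Φ t₀ 0)⁻¹ + ∫ u in (0:ℝ)..s, g t u) * Φ t₀ s = 0 :=
      norm_le_zero_iff.1 h5
    exact sub_eq_zero.1 h6
  -- the monodromy identity
  have hMid : ∀ t ∈ Set.Icc (t₀ - δ) (t₀ + δ),
      Φ t 1 * (Φ t 0)⁻¹ = Φ t₀ 1 * (Φ t₀ 0)⁻¹ +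
        (∫ u in (0:ℝ)..1, g t u) * (Φ t₀ 1 * (Φ t 0)⁻¹) := by
    intro t ht
    have h1 := hDuhamel t ht 1 ⟨zero_le_one, le_rfl⟩
    have hu0 : IsUnit (Φ t₀ 0).det := hdet 0 ⟨le_rfl, zero_le_one⟩
    have hut : IsUnit (Φ t 0).det :=
      (Matrix.isUnit_iff_isUnit_det _).1 (hΦunit t (hJsub t ht) 0 ⟨le_rfl, zero_le_one⟩)
    have h2 : Φ t₀ 1 * (Φ t 0)⁻¹ = Φ t₀ 0 * (Φ t 0)⁻¹ * (Φ t₀ 1 * (Φ t₀ 0)⁻¹) := by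
      calc Φ t₀ 1 * (Φ t 0)⁻¹
          = Φ t₀ 1 * (Φ t₀ 0)⁻¹ * (Φ t₀ 0 * (Φ t 0)⁻¹) := by
            rw [mul_assoc, ← mul_assoc ((Φ t₀ 0)⁻¹), Matrix.nonsing_inv_mul _ hu0, one_mul]
        _ = Φ t₀ 0 * (Φ t 0)⁻¹ * (Φ t₀ 1 * (Φ t₀ 0)⁻¹) := hcomm t (hJsub t ht)
    have hX : Φ t 0 * (Φ t₀ 0)⁻¹ * Φ t₀ 1 * (Φ t 0)⁻¹ = Φ t₀ 1 * (Φ t₀ 0)⁻¹ := by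
      calc Φ t 0 * (Φ t₀ 0)⁻¹ * Φ t₀ 1 * (Φ t 0)⁻¹
          = Φ t 0 * (Φ t₀ 0)⁻¹ * (Φ t₀ 1 * (Φ t 0)⁻¹) := by rw [mul_assoc]
        _ = Φ t 0 * (Φ t₀ 0)⁻¹ * (Φ t₀ 0 * (Φ t 0)⁻¹ * (Φ t₀ 1 * (Φ t₀ 0)⁻¹)) := by rw [h2]
        _ = Φ t 0 * ((Φ t₀ 0)⁻¹ * Φ t₀ 0) * ((Φ t 0)⁻¹ * (Φ t₀ 1 * (Φ t₀ 0)⁻¹)) := by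
            simp only [mul_assoc]
        _ = Φ t₀ 1 * (Φ t₀ 0)⁻¹ := by
            rw [Matrix.nonsing_inv_mul _ hu0, mul_one, ← mul_assoc,
              Matrix.mul_nonsing_inv _ hut, one_mul]
    rw [h1, add_mul, add_mul, hX, mul_assoc]
  -- the slope identity
  have hslope : ∀ᶠ t in nhdsWithin t₀ {t₀}ᶜ,
      slope (fun t => Φ t 1 * (Φ t 0)⁻¹) t₀ t =
        (∫ u in (0:ℝ)..1, Φ t u * ((t - t₀)⁻¹ • (ξ t u - ξ t₀ u)) * (Φ t₀ u)⁻¹) *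
          (Φ t₀ 1 * (Φ t 0)⁻¹) := by
    filter_upwards [mem_nhdsWithin_of_mem_nhds hJnhds] with t ht
    rw [slope_def_module, hMid t ht, add_sub_cancel_left, ← Matrix.smul_mul,
      ← intervalIntegral.integral_smul]
    congr 1
    apply intervalIntegral.integral_congr
    intro u hu
    simp only [hgdef, Matrix.smul_mul, Matrix.mul_smul]
  -- continuity of matrix inversion at Φ t₀ 0
  have hu0 : IsUnit (Φ t₀ 0).det := hdet 0 ⟨le_rfl, zero_le_one⟩
  have hinvA : ContinuousAt (fun A : Matrix (Fin n) (Fin n) ℂ => A⁻¹) (Φ t₀ 0) := by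
    have h1 : ContinuousAt
        (fun A : Matrix (Fin n) (Fin n) ℂ => (A.det)⁻¹ • A.adjugate) (Φ t₀ 0) := by
      refine ContinuousAt.smul (ContinuousAt.inv₀ ?_ hu0.ne_zero) ?_
      · exact (continuous_id.matrix_det).continuousAt
      · exact (continuous_id.matrix_adjugate).continuousAt
    refine h1.congr ?_
    filter_upwards with A
    rw [Matrix.inv_def, Ring.inverse_eq_inv']
  have hΦ0inv : Tendsto (fun t => (Φ t 0)⁻¹) (nhdsWithin t₀ {t₀}ᶜ) (nhds ((Φ t₀ 0)⁻¹)) :=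
    (Tendsto.comp hinvA hΦ0cont).mono_left nhdsWithin_le_nhds
  have hBtend : Tendsto (fun t => Φ t₀ 1 * (Φ t 0)⁻¹) (nhdsWithin t₀ {t₀}ᶜ)
      (nhds (Φ t₀ 1 * (Φ t₀ 0)⁻¹)) := tendsto_const_nhds.mul hΦ0inv
  -- parameter continuity of Φ at each u
  have hΦparam : ∀ u ∈ Set.Icc (0:ℝ) 1,
      Tendsto (fun t => Φ t u) (nhdsWithin t₀ {t₀}ᶜ) (nhds (Φ t₀ u)) := by
    intro u hu
    have hgbd : ∀ t ∈ Set.Icc (t₀ - δ) (t₀ + δ), ∀ v ∈ Set.Icc (0:ℝ) 1,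
        ‖g t v‖ ≤ (n:ℝ) * ((n:ℝ) * ((‖Φ t₀ 0‖ + 1) * Real.exp ((n:ℝ) * max K₁ 0)) *
          (max K₂ 0 * |t - t₀|)) * max B₂ 0 := by
      intro t ht v hv
      calc ‖g t v‖ ≤ (n:ℝ) * ‖Φ t v * (ξ t v - ξ t₀ v)‖ * ‖(Φ t₀ v)⁻¹‖ :=
            mono_norm_mul_le _ _
        _ ≤ (n:ℝ) * ((n:ℝ) * ‖Φ t v‖ * ‖ξ t v - ξ t₀ v‖) * ‖(Φ t₀ v)⁻¹‖ := by
            have h1 := mono_norm_mul_le (Φ t v) (ξ t v - ξ t₀ v)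
            have h2 : (0:ℝ) ≤ ‖(Φ t₀ v)⁻¹‖ := norm_nonneg _
            have h4 : (0:ℝ) ≤ (n:ℝ) := Nat.cast_nonneg n
            nlinarith [mul_le_mul_of_nonneg_left h1 h4]
        _ ≤ (n:ℝ) * ((n:ℝ) * ((‖Φ t₀ 0‖ + 1) * Real.exp ((n:ℝ) * max K₁ 0)) *
              (max K₂ 0 * |t - t₀|)) * max B₂ 0 := by
            have h4 : (0:ℝ) ≤ (n:ℝ) := Nat.cast_nonneg n
            gcongr <;>
              first
              | exact norm_nonneg _
              | exact hΦbdd t ht v hv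
              | exact hξMVT v hv t ht
              | exact hBinv v hv
    have hIten : Tendsto (fun t => ∫ v in (0:ℝ)..u, g t v) (nhdsWithin t₀ {t₀}ᶜ) (nhds 0) := by
      apply squeeze_zero_norm'
        (a := fun t => (n:ℝ) * ((n:ℝ) * ((‖Φ t₀ 0‖ + 1) * Real.exp ((n:ℝ) * max K₁ 0)) *
          (max K₂ 0 * |t - t₀|)) * max B₂ 0)
      · filter_upwards [mem_nhdsWithin_of_mem_nhds hJnhds] with t ht
        have h1 := intervalIntegral.norm_integral_le_of_norm_le_const
          (C := (n:ℝ) * ((n:ℝ) * ((‖Φ t₀ 0‖ + 1) * Real.exp ((n:ℝ) * max K₁ 0)) *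
            (max K₂ 0 * |t - t₀|)) * max B₂ 0) (f := g t) (a := 0) (b := u) ?_
        · refine h1.trans ?_
          have h2 : |u - 0| ≤ 1 := by rw [sub_zero, abs_of_nonneg hu.1]; exact hu.2
          have h4 : (0:ℝ) ≤ (n:ℝ) := Nat.cast_nonneg n
          have h5 : (0:ℝ) ≤ (n:ℝ) * ((n:ℝ) * ((‖Φ t₀ 0‖ + 1) * Real.exp ((n:ℝ) * max K₁ 0)) *
              (max K₂ 0 * |t - t₀|)) * max B₂ 0 := by positivity
          nlinarith
        · intro v hv
          have hv' : v ∈ Set.Icc (0:ℝ) 1 := by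
            rw [Set.uIoc_of_le hu.1] at hv
            exact ⟨hv.1.le, hv.2.trans hu.2⟩
          exact hgbd t ht v hv'
      · have h1 : Tendsto (fun t : ℝ => (n:ℝ) * ((n:ℝ) * ((‖Φ t₀ 0‖ + 1) *
            Real.exp ((n:ℝ) * max K₁ 0)) * (max K₂ 0 * |t - t₀|)) * max B₂ 0) (nhds t₀)
            (nhds ((n:ℝ) * ((n:ℝ) * ((‖Φ t₀ 0‖ + 1) *
              Real.exp ((n:ℝ) * max K₁ 0)) * (max K₂ 0 * |t₀ - t₀|)) * max B₂ 0)) := by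
          apply Continuous.tendsto
          have habs : Continuous fun t : ℝ => |t - t₀| :=
            (continuous_id.sub continuous_const).abs
          exact (continuous_const.mul
            (continuous_const.mul (continuous_const.mul habs))).mul continuous_const
        simp only [sub_self, abs_zero, mul_zero, zero_mul] at h1
        exact h1.mono_left nhdsWithin_le_nhds
    have hDten : Tendsto (fun t => Φ t 0 * (Φ t₀ 0)⁻¹) (nhdsWithin t₀ {t₀}ᶜ)
        (nhds (Φ t₀ 0 * (Φ t₀ 0)⁻¹)) :=
      ((hΦ0cont.tendsto.mono_left nhdsWithin_le_nhds).mul tendsto_const_nhds)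
    have hWten := (hDten.add hIten).mul (tendsto_const_nhds (x := Φ t₀ u))
    rw [add_zero, Matrix.mul_nonsing_inv _ hu0, one_mul] at hWten
    refine Tendsto.congr' ?_ hWten
    filter_upwards [mem_nhdsWithin_of_mem_nhds hJnhds] with t ht
    exact (hDuhamel t ht u hu).symm
  -- dominated convergence for the integral factor
  have hsub01 : Set.uIoc (0:ℝ) 1 ⊆ Set.Icc (0:ℝ) 1 := by
    rw [Set.uIoc_of_le zero_le_one]; exact Set.Ioc_subset_Icc_self
  have hIntTendsto : Tendsto
      (fun t => ∫ u in (0:ℝ)..1, Φ t u * ((t - t₀)⁻¹ • (ξ t u - ξ t₀ u)) * (Φ t₀ u)⁻¹)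
      (nhdsWithin t₀ {t₀}ᶜ)
      (nhds (∫ u in (0:ℝ)..1, Φ t₀ u * ξ' t₀ u * (Φ t₀ u)⁻¹)) := by
    apply intervalIntegral.tendsto_integral_filter_of_dominated_convergence
      (bound := fun _ => (n:ℝ) * ((n:ℝ) * ((‖Φ t₀ 0‖ + 1) * Real.exp ((n:ℝ) * max K₁ 0)) *
        max K₂ 0) * max B₂ 0)
    · filter_upwards [mem_nhdsWithin_of_mem_nhds hJnhds] with t ht
      apply ContinuousOn.aestronglyMeasurable ?_ measurableSet_uIoc
      apply ContinuousOn.mono ?_ hsub01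
      exact ((hΦcont t (hJsub t ht)).mul
        (((hξscont t (hJsub t ht)).sub (hξscont t₀ ht₀')).const_smul (t - t₀)⁻¹)).mul hInv
    · filter_upwards [mem_nhdsWithin_of_mem_nhds hJnhds, self_mem_nhdsWithin] with t ht htne
      apply Filter.Eventually.of_forall
      intro u hu
      have hu' : u ∈ Set.Icc (0:ℝ) 1 := hsub01 hu
      have htne' : t ≠ t₀ := htne
      have habs : 0 < |t - t₀| := abs_pos.2 (sub_ne_zero.2 htne')
      have hΔ : ‖(t - t₀)⁻¹ • (ξ t u - ξ t₀ u)‖ ≤ max K₂ 0 := by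
        rw [norm_smul, norm_inv, Real.norm_eq_abs]
        calc |t - t₀|⁻¹ * ‖ξ t u - ξ t₀ u‖
            ≤ |t - t₀|⁻¹ * (max K₂ 0 * |t - t₀|) := by
              have h2 := hξMVT u hu' t ht
              have h3 : (0:ℝ) ≤ |t - t₀|⁻¹ := by positivity
              nlinarith
          _ = max K₂ 0 := by
              rw [mul_comm (max K₂ 0), ← mul_assoc, inv_mul_cancel₀ habs.ne', one_mul]
      calc ‖Φ t u * ((t - t₀)⁻¹ • (ξ t u - ξ t₀ u)) * (Φ t₀ u)⁻¹‖
          ≤ (n:ℝ) * ‖Φ t u * ((t - t₀)⁻¹ • (ξ t u - ξ t₀ u))‖ * ‖(Φ t₀ u)⁻¹‖ :=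
            mono_norm_mul_le _ _
        _ ≤ (n:ℝ) * ((n:ℝ) * ‖Φ t u‖ * ‖(t - t₀)⁻¹ • (ξ t u - ξ t₀ u)‖) * ‖(Φ t₀ u)⁻¹‖ := by
            have h1 := mono_norm_mul_le (Φ t u) ((t - t₀)⁻¹ • (ξ t u - ξ t₀ u))
            have h2 : (0:ℝ) ≤ ‖(Φ t₀ u)⁻¹‖ := norm_nonneg _
            have h4 : (0:ℝ) ≤ (n:ℝ) := Nat.cast_nonneg n
            nlinarith [mul_le_mul_of_nonneg_left h1 h4]
        _ ≤ (n:ℝ) * ((n:ℝ) * ((‖Φ t₀ 0‖ + 1) * Real.exp ((n:ℝ) * max K₁ 0)) * max K₂ 0) *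
              max B₂ 0 := by
            have h4 : (0:ℝ) ≤ (n:ℝ) := Nat.cast_nonneg n
            gcongr <;>
              first
              | exact norm_nonneg _
              | exact hΦbdd t ht u hu'
              | exact hΔ
              | exact hBinv u hu'
    · exact intervalIntegrable_const
    · apply Filter.Eventually.of_forall
      intro u hu
      have hu' : u ∈ Set.Icc (0:ℝ) 1 := hsub01 hu
      have hΔten : Tendsto (fun t => (t - t₀)⁻¹ • (ξ t u - ξ t₀ u)) (nhdsWithin t₀ {t₀}ᶜ)
          (nhds (ξ' t₀ u)) := by
        have h := hasDerivAt_iff_tendsto_slope.1 (hξderiv u hu' t₀ ht₀')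
        exact h.congr fun t => slope_def_module _ _ _
      exact ((hΦparam u hu').mul hΔten).mul tendsto_const_nhds
  -- wrap up
  refine hasDerivAt_iff_tendsto_slope.2 ?_
  exact Tendsto.congr' (Filter.EventuallyEq.symm hslope) (hIntTendsto.mul hBtend)
end

section
/- The explicit gauge solves its Cauchy problem: Let λ ∈ ℂ∖{0} and A₀(λ) = [[0, λ⁻¹/2], [λ/2, 0]] (the Delaunay residue at t = 0 in the case r = 1/2, s = 0). Let p ∈ ℂ, q ∈ ℂ∖{0}, and let h(z) = z/(pz + q). On the disk {z ∈ ℂ : |p z| < |q|} define G(z,λ) = [[ (1 + pz/q)^{−1/2}, 0 ], [ λ·p·z·q⁻¹·(1 + pz/q)^{−1/2}, (1 + pz/q)^{1/2} ]], using the principal branch of the square root (well defined since |pz/q| < 1). Then G is holomorphic in z on this disk, G(0,λ) = I, det G(z,λ) = 1, and for every z ≠ 0 in the disk, ∂G/∂z(z,λ) = G(z,λ)·A₀(λ)·z⁻¹ − A₀(λ)·G(z,λ)·(h'(z)/h(z)), where h'(z)/h(z) = q/(z·(pz+q)). -/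
/-!
Write `w = 1 + p z / q`. On the disk `‖p z‖ < ‖q‖` the point `w` lies in the slit plane, so
`w ^ a` is holomorphic with logarithmic derivative `a · p / (p z + q)`. The gauge is
`!![g, 0; (λ p z / q) g, s]` with `g = w ^ (-1/2)` and `s = w ^ (1/2)`; then `g s = 1` gives the
determinant, and `s = g w` is all that is needed to turn the Cauchy equation into an identity of
rational functions.
-/

open Matrix Complex

attribute [local instance] Matrix.normedAddCommGroup Matrix.normedSpace

/-- The Delaunay residue at `t = 0` in the spherical case `r = 1/2`, `s = 0`. -/
noncomputable def A0 (lam : ℂ) : Matrix (Fin 2) (Fin 2) ℂ :=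
  !![0, lam⁻¹ / 2; lam / 2, 0]

/-- The explicit gauge. -/
noncomputable def dpwGauge (p q : ℂ) (lam z : ℂ) : Matrix (Fin 2) (Fin 2) ℂ :=
  !![(1 + p * z / q) ^ (-(1 : ℂ) / 2), 0;
     lam * p * z * q⁻¹ * (1 + p * z / q) ^ (-(1 : ℂ) / 2),
     (1 + p * z / q) ^ ((1 : ℂ) / 2)]

theorem hasDerivAt_matrix_fin_two {𝕜 E : Type*} [NontriviallyNormedField 𝕜]
    [NormedAddCommGroup E] [NormedSpace 𝕜 E] {a b c d : 𝕜 → E} {a' b' c' d' : E} {x : 𝕜}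
    (ha : HasDerivAt a a' x) (hb : HasDerivAt b b' x) (hc : HasDerivAt c c' x)
    (hd : HasDerivAt d d' x) :
    HasDerivAt (fun x => !![a x, b x; c x, d x]) !![a', b'; c', d'] x := by
  refine hasDerivAt_pi.2 fun i => hasDerivAt_pi.2 fun j => ?_
  fin_cases i <;> fin_cases j <;> assumption

section Disk

variable {p q z : ℂ}

theorem one_add_mul_div_mem_slitPlane (hz : ‖p * z‖ < ‖q‖) : 1 + p * z / q ∈ slitPlane :=
  mem_slitPlane_of_norm_lt_one <| by
    rwa [norm_div, div_lt_one ((norm_nonneg _).trans_lt hz)]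

theorem mul_add_ne_zero_of_norm_lt (hz : ‖p * z‖ < ‖q‖) : p * z + q ≠ 0 := by
  intro h
  rw [eq_neg_of_add_eq_zero_left h, norm_neg] at hz
  exact lt_irrefl _ hz

theorem hasDerivAt_one_add_mul_div_cpow (a : ℂ) (hz : ‖p * z‖ < ‖q‖) :
    HasDerivAt (fun z => (1 + p * z / q) ^ a)
      (a * (p / (p * z + q)) * (1 + p * z / q) ^ a) z := by
  have hw := one_add_mul_div_mem_slitPlane hz
  have hq : q ≠ 0 := norm_pos_iff.mp ((norm_nonneg _).trans_lt hz)
  have hlin : HasDerivAt (fun z => 1 + p * z / q) (p / q) z := by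
    simpa using (((hasDerivAt_id z).const_mul p).div_const q).const_add 1
  convert hlin.cpow_const hw using 1
  have hpzq : p * z + q = q * (1 + p * z / q) := by field_simp; ring
  rw [cpow_sub _ _ (slitPlane_ne_zero hw), cpow_one, hpzq]
  -- otherwise `field_simp` also clears the denominator inside the base of the power
  generalize 1 + p * z / q = w at hw ⊢
  field_simp [slitPlane_ne_zero hw]

end Disk

section HalfPowers

variable {x : ℂ}

theorem cpow_neg_half_mul_cpow_half (hx : x ≠ 0) :
    x ^ (-(1 : ℂ) / 2) * x ^ ((1 : ℂ) / 2) = 1 := by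
  rw [← cpow_add _ _ hx]; norm_num

theorem cpow_half_eq_cpow_neg_half_mul (hx : x ≠ 0) :
    x ^ ((1 : ℂ) / 2) = x ^ (-(1 : ℂ) / 2) * x := by
  rw [show (1 : ℂ) / 2 = -(1 : ℂ) / 2 + 1 by ring, cpow_add _ _ hx, cpow_one]

end HalfPowers

section Gauge

variable {lam p q z : ℂ}

theorem hasDerivAt_dpwGauge (hz : ‖p * z‖ < ‖q‖) :
    HasDerivAt (dpwGauge p q lam)
      !![-(1 : ℂ) / 2 * (p / (p * z + q)) * (1 + p * z / q) ^ (-(1 : ℂ) / 2), 0;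
        lam * p * q⁻¹ * (1 + p * z / q) ^ (-(1 : ℂ) / 2) +
          lam * p * z * q⁻¹ *
            (-(1 : ℂ) / 2 * (p / (p * z + q)) * (1 + p * z / q) ^ (-(1 : ℂ) / 2)),
        (1 : ℂ) / 2 * (p / (p * z + q)) * (1 + p * z / q) ^ ((1 : ℂ) / 2)] z := by
  have hg := hasDerivAt_one_add_mul_div_cpow (-(1 : ℂ) / 2) hz
  have hc : HasDerivAt (fun z => lam * p * z * q⁻¹) (lam * p * q⁻¹) z := by
    simpa using ((hasDerivAt_id z).const_mul (lam * p)).mul_const q⁻¹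
  exact hasDerivAt_matrix_fin_two hg (hasDerivAt_const z 0) (hc.mul hg)
    (hasDerivAt_one_add_mul_div_cpow _ hz)

theorem det_dpwGauge (hz : ‖p * z‖ < ‖q‖) : (dpwGauge p q lam z).det = 1 := by
  rw [dpwGauge, det_fin_two_of, zero_mul, sub_zero,
    cpow_neg_half_mul_cpow_half (slitPlane_ne_zero (one_add_mul_div_mem_slitPlane hz))]

/-- For `g = w ^ (-1/2)` and `s = w ^ (1/2)` the matrix `!![g, 0; λ p z q⁻¹ g, s]` is
`dpwGauge p q lam z`, and the left-hand side is its derivative from `hasDerivAt_dpwGauge`. -/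
theorem dpwGauge_deriv_eq (hlam : lam ≠ 0) (hq : q ≠ 0) (hz : z ≠ 0) (hpzq : p * z + q ≠ 0)
    {g s : ℂ} (hs : s = g * (1 + p * z / q)) :
    !![-(1 : ℂ) / 2 * (p / (p * z + q)) * g, 0;
        lam * p * q⁻¹ * g + lam * p * z * q⁻¹ * (-(1 : ℂ) / 2 * (p / (p * z + q)) * g),
        (1 : ℂ) / 2 * (p / (p * z + q)) * s] =
      z⁻¹ • (!![g, 0; lam * p * z * q⁻¹ * g, s] * A0 lam) -
        (q / (z * (p * z + q))) • (A0 lam * !![g, 0; lam * p * z * q⁻¹ * g, s]) := by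
  subst hs
  have hzpq : z * p + q ≠ 0 := by rwa [mul_comm]
  ext i j
  fin_cases i <;> fin_cases j <;>
    simp only [A0, of_apply, cons_val', cons_val_zero, cons_val_one, empty_val',
      cons_val_fin_one, Fin.isValue, Fin.zero_eta, Fin.mk_one, Matrix.sub_apply,
      Matrix.smul_apply, smul_eq_mul, mul_apply, Fin.sum_univ_two] <;>
    field_simp <;> ring

end Gauge

theorem explicit_gauge_cauchy_problem_general
    (lam : ℂ) (hlam : lam ≠ 0) (p q : ℂ) :
    DifferentiableOn ℂ (dpwGauge p q lam)
      {z : ℂ | ‖p * z‖ < ‖q‖} ∧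
    dpwGauge p q lam 0 = 1 ∧
    (∀ z ∈ {z : ℂ | ‖p * z‖ < ‖q‖},
      (dpwGauge p q lam z).det = 1) ∧
    (∀ z ∈ {z : ℂ | ‖p * z‖ < ‖q‖}, z ≠ 0 →
      HasDerivAt (dpwGauge p q lam)
        (z⁻¹ • (dpwGauge p q lam z * A0 lam) -
          (q / (z * (p * z + q))) • (A0 lam * dpwGauge p q lam z)) z) := by
  refine ⟨fun z hz => (hasDerivAt_dpwGauge hz).differentiableAt.differentiableWithinAt,
    by simp [dpwGauge, one_fin_two], fun z hz => det_dpwGauge hz, fun z hz hz0 => ?_⟩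
  have hq : q ≠ 0 := norm_pos_iff.mp ((norm_nonneg _).trans_lt hz)
  have hs := cpow_half_eq_cpow_neg_half_mul (slitPlane_ne_zero (one_add_mul_div_mem_slitPlane hz))
  convert hasDerivAt_dpwGauge hz using 1
  exact (dpwGauge_deriv_eq hlam hq hz0 (mul_add_ne_zero_of_norm_lt hz) hs).symm

/-- The explicit gauge solves its Cauchy problem
`dG = G·A₀·z⁻¹dz − A₀·G·(dh/h)`, `G(0) = I`, where `h(z) = z/(pz+q)`. -/
theorem explicit_gauge_cauchy_problem
    (lam : ℂ) (hlam : lam ≠ 0) (p q : ℂ) (hq : q ≠ 0) :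
    DifferentiableOn ℂ (dpwGauge p q lam)
      {z : ℂ | ‖p * z‖ < ‖q‖} ∧
    dpwGauge p q lam 0 = 1 ∧
    (∀ z ∈ {z : ℂ | ‖p * z‖ < ‖q‖},
      (dpwGauge p q lam z).det = 1) ∧
    (∀ z ∈ {z : ℂ | ‖p * z‖ < ‖q‖}, z ≠ 0 →
      HasDerivAt (dpwGauge p q lam)
        (z⁻¹ • (dpwGauge p q lam z * A0 lam) -
          (q / (z * (p * z + q))) • (A0 lam * dpwGauge p q lam z)) z) :=
  explicit_gauge_cauchy_problem_general lam hlam p q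
end
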